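/- arXiv:2405.09457 — 2 statements merged into one kernel-verified Lean document; each statement's English description precedes it below -/
import Mathlib

section
/- (Lemma on j unrestricted k-mers, barred version with top restriction.) Let t ≥ 1 and j ≥ 0 be integers with s = t + 2 + j, and for an integer m' ≥ 1 let A(m') denote the number of configurations of s k-mers on the n × m' lattice in which the rows 1, k+1, …, (t−1)k+1 are all bottom-anchored, row tk+1 is barred, and at least one placement occupies a site in row m'. Then for every integer m ≥ ks + 1, ∑_{i=0}^{j+1} (−1)^i · C(j+1, i) · A(m−i) = 0. -/
/-- The set of sites occupied by a horizontal `k`-mer starting at column `c`, row `r`. -/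
def horizKmer (k c r : ℕ) : Finset (ℕ × ℕ) :=
  (Finset.range k).image fun i => (c + i, r)

/-- The set of sites occupied by a vertical `k`-mer at column `c` starting at row `r`. -/
def vertKmer (k c r : ℕ) : Finset (ℕ × ℕ) :=
  (Finset.range k).image fun i => (c, r + i)

/-- A `k`-mer placement on the `n × m` lattice with free boundary conditions,
identified with its set of occupied sites `(c, r)`, `1 ≤ c ≤ n`, `1 ≤ r ≤ m`. -/
def IsFreePlacement (k n m : ℕ) (p : Finset (ℕ × ℕ)) : Prop :=
  (∃ c r, 1 ≤ c ∧ c + k ≤ n + 1 ∧ 1 ≤ r ∧ r ≤ m ∧ p = horizKmer k c r) ∨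
  (∃ c r, 1 ≤ c ∧ c ≤ n ∧ 1 ≤ r ∧ r + k ≤ m + 1 ∧ p = vertKmer k c r)

/-- A configuration of `s` `k`-mers on the `n × m` lattice with free boundary
conditions: a set of `s` placements whose occupied site sets are pairwise disjoint. -/
def IsFreeConfig (k n m s : ℕ) (C : Finset (Finset (ℕ × ℕ))) : Prop :=
  C.card = s ∧ (∀ p ∈ C, IsFreePlacement k n m p) ∧
    (C : Set (Finset (ℕ × ℕ))).Pairwise fun p q => Disjoint p q

/-- `a(m, s)`: the number of configurations of `s` `k`-mers on the `n × m`
lattice with free boundary conditions. -/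
noncomputable def freeCount (k n m s : ℕ) : ℕ :=
  {C | IsFreeConfig k n m s C}.ncard

/-- A placement touches row `r` from above: it occupies a site in row `r`
and all its sites are in rows `≥ r` (i.e. it is horizontal in row `r`, or
vertical occupying rows `r, r+1, …, r+k-1`). -/
def TouchesFromAbove (p : Finset (ℕ × ℕ)) (r : ℕ) : Prop :=
  (∃ q ∈ p, q.2 = r) ∧ ∀ q ∈ p, r ≤ q.2

/-- A placement overhangs row `r`: it occupies a site in row `r` and also a site
in a row strictly below `r` (hence it is vertical with lowest occupied row `< r`). -/
def Overhangs (p : Finset (ℕ × ℕ)) (r : ℕ) : Prop :=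
  (∃ q ∈ p, q.2 = r) ∧ ∃ q ∈ p, q.2 < r

/-- In a configuration, row `r` is bottom-anchored: at least one placement occupies
a site in row `r`, and every placement occupying a site in row `r` touches row `r`
from above. -/
def BottomAnchored (C : Finset (Finset (ℕ × ℕ))) (r : ℕ) : Prop :=
  (∃ p ∈ C, ∃ q ∈ p, q.2 = r) ∧
    ∀ p ∈ C, (∃ q ∈ p, q.2 = r) → TouchesFromAbove p r

/-- In a configuration, row `r` is barred: at least one placement overhangs row `r`. -/
def Barred (C : Finset (Finset (ℕ × ℕ))) (r : ℕ) : Prop :=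
  ∃ p ∈ C, Overhangs p r


/-! ### Auxiliary definitions for the proof -/

open Finset
open scoped Classical

/-- Row `r` is occupied in configuration `C`. -/
def occRow (C : Finset (Finset (ℕ × ℕ))) (r : ℕ) : Prop := ∃ p ∈ C, ∃ q ∈ p, q.2 = r

/-- The boundary between rows `b` and `b+1` is spanned by some placement of `C`. -/
def spannedB (C : Finset (Finset (ℕ × ℕ))) (b : ℕ) : Prop :=
  ∃ p ∈ C, (∃ q ∈ p, q.2 = b) ∧ ∃ q ∈ p, q.2 = b + 1

/-- Leaders: unspanned boundaries at occupied rows in `[h, M-1]`. -/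
noncomputable def leadSet (C : Finset (Finset (ℕ × ℕ))) (h M : ℕ) : Finset ℕ :=
  (Finset.Icc h (M - 1)).filter fun b => ¬ spannedB C b ∧ occRow C b

/-- Gap leaders: leaders with an empty row just above. -/
noncomputable def gapSet (C : Finset (Finset (ℕ × ℕ))) (h M : ℕ) : Finset ℕ :=
  (leadSet C h M).filter fun b => ¬ occRow C (b + 1)

/-- Index of a boundary: number of leaders strictly below it. -/
noncomputable def idxL (C : Finset (Finset (ℕ × ℕ))) (h M b : ℕ) : ℕ :=
  ((leadSet C h M).filter (· < b)).card

def upMap (b : ℕ) (q : ℕ × ℕ) : ℕ × ℕ := if b + 1 ≤ q.2 then (q.1, q.2 + 1) else q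
def downMap (b : ℕ) (q : ℕ × ℕ) : ℕ × ℕ := if b + 2 ≤ q.2 then (q.1, q.2 - 1) else q

/-- Insert an empty row just above boundary `b`. -/
def insRow (b : ℕ) (C : Finset (Finset (ℕ × ℕ))) : Finset (Finset (ℕ × ℕ)) :=
  C.image fun p => p.image (upMap b)

/-- Delete the (empty) row `b+1`. -/
def delRow (b : ℕ) (C : Finset (Finset (ℕ × ℕ))) : Finset (Finset (ℕ × ℕ)) :=
  C.image fun p => p.image (downMap b)

/-- The full property of configurations counted by `A(M)`. -/
def GoodConf (k n t s M : ℕ) (C : Finset (Finset (ℕ × ℕ))) : Prop :=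
  IsFreeConfig k n M s C ∧ (∀ j' < t, BottomAnchored C (j' * k + 1)) ∧
    Barred C (t * k + 1) ∧ ∃ p ∈ C, ∃ q ∈ p, q.2 = M

/-! ### Placement structure lemmas -/

lemma placement_struct {k n M : ℕ} (hk : 1 ≤ k) {p : Finset (ℕ × ℕ)}
    (hp : IsFreePlacement k n M p) :
    ∃ lo hi, 1 ≤ lo ∧ lo ≤ hi ∧ hi + 1 ≤ lo + k ∧ hi ≤ M ∧
      (∀ q ∈ p, lo ≤ q.2 ∧ q.2 ≤ hi) ∧ (∀ r, lo ≤ r → r ≤ hi → ∃ q ∈ p, q.2 = r) := by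
  rcases hp with ⟨c, r, hc1, hck, hr1, hrM, rfl⟩ | ⟨c, r, hc1, hcn, hr1, hrk, rfl⟩
  · refine ⟨r, r, hr1, le_rfl, by omega, hrM, ?_, ?_⟩
    · intro q hq
      simp only [horizKmer, mem_image, mem_range] at hq
      obtain ⟨i, _, rfl⟩ := hq; exact ⟨le_rfl, le_rfl⟩
    · intro ρ h1 h2
      refine ⟨(c + 0, r), ?_, by omega⟩
      exact mem_image.2 ⟨0, mem_range.2 (by omega), rfl⟩
  · refine ⟨r, r + (k - 1), hr1, by omega, by omega, by omega, ?_, ?_⟩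
    · intro q hq
      simp only [vertKmer, mem_image, mem_range] at hq
      obtain ⟨i, hi, rfl⟩ := hq; constructor <;> simp <;> omega
    · intro ρ h1 h2
      refine ⟨(c, ρ), ?_, rfl⟩
      simp only [vertKmer, mem_image, mem_range]
      exact ⟨ρ - r, by omega, by simp; omega⟩

lemma placement_between {k n M : ℕ} (hk : 1 ≤ k) {p : Finset (ℕ × ℕ)}
    (hp : IsFreePlacement k n M p) {q1 q2 : ℕ × ℕ} (h1 : q1 ∈ p) (h2 : q2 ∈ p)
    {r : ℕ} (hr1 : q1.2 ≤ r) (hr2 : r ≤ q2.2) : ∃ q ∈ p, q.2 = r := by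
  obtain ⟨lo, hi, _, _, _, _, hmem, hconv⟩ := placement_struct hk hp
  exact hconv r (le_trans (hmem q1 h1).1 hr1) (le_trans hr2 (hmem q2 h2).2)

lemma placement_span {k n M : ℕ} (hk : 1 ≤ k) {p : Finset (ℕ × ℕ)}
    (hp : IsFreePlacement k n M p) {q1 q2 : ℕ × ℕ} (h1 : q1 ∈ p) (h2 : q2 ∈ p) :
    q2.2 + 1 ≤ q1.2 + k := by
  obtain ⟨lo, hi, _, _, hlk, _, hmem, _⟩ := placement_struct hk hp
  have := (hmem q1 h1).1; have := (hmem q2 h2).2; omega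

lemma placement_row_pos {k n M : ℕ} (hk : 1 ≤ k) {p : Finset (ℕ × ℕ)}
    (hp : IsFreePlacement k n M p) {q : ℕ × ℕ} (hq : q ∈ p) : 1 ≤ q.2 ∧ q.2 ≤ M := by
  obtain ⟨lo, hi, hlo1, _, _, hhiM, hmem, _⟩ := placement_struct hk hp
  have := hmem q hq; omega

lemma placement_mono {k n M M' : ℕ} (hMM : M ≤ M') {p : Finset (ℕ × ℕ)}
    (hp : IsFreePlacement k n M p) : IsFreePlacement k n M' p := by
  rcases hp with ⟨c, r, h1, h2, h3, h4, h5⟩ | ⟨c, r, h1, h2, h3, h4, h5⟩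
  · exact Or.inl ⟨c, r, h1, h2, h3, by omega, h5⟩
  · exact Or.inr ⟨c, r, h1, h2, h3, by omega, h5⟩

lemma placement_nonempty {k n M : ℕ} (hk : 1 ≤ k) {p : Finset (ℕ × ℕ)}
    (hp : IsFreePlacement k n M p) : p.Nonempty := by
  obtain ⟨lo, hi, _, hlohi, _, _, _, hconv⟩ := placement_struct hk hp
  obtain ⟨q, hq, _⟩ := hconv lo le_rfl hlohi
  exact ⟨q, hq⟩

/-! ### Row insertion and deletion -/

lemma upMap_row_ge (b : ℕ) (q : ℕ × ℕ) : q.2 ≤ (upMap b q).2 := by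
  unfold upMap; split <;> simp

lemma upMap_fix {b : ℕ} {q : ℕ × ℕ} (h : q.2 ≤ b) : upMap b q = q := by
  unfold upMap; rw [if_neg]; omega

lemma upMap_inj (b : ℕ) : Function.Injective (upMap b) := by
  rintro ⟨c, r⟩ ⟨c', r'⟩ h
  unfold upMap at h
  split at h <;> split at h <;> simp only [Prod.mk.injEq] at h ⊢ <;> omega

lemma mer_dichot_up {k n M b : ℕ} {C : Finset (Finset (ℕ × ℕ))} {p : Finset (ℕ × ℕ)}
    (hk : 1 ≤ k) (hpl : IsFreePlacement k n M p) (hpC : p ∈ C) (hb : ¬ spannedB C b) :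
    (∀ q ∈ p, q.2 ≤ b) ∨ (∀ q ∈ p, b + 1 ≤ q.2) := by
  by_cases hex : ∃ q ∈ p, b + 1 ≤ q.2
  · right; intro q hq
    by_contra hlt
    push_neg at hlt
    obtain ⟨q2, hq2, hq2b⟩ := hex
    have hsb : ∃ q' ∈ p, q'.2 = b :=
      placement_between hk hpl hq hq2 (by omega) (by omega)
    have hsb1 : ∃ q' ∈ p, q'.2 = b + 1 :=
      placement_between hk hpl hq hq2 (by omega) (by omega)
    exact hb ⟨p, hpC, hsb, hsb1⟩
  · left; intro q hq
    push_neg at hex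
    have := hex q hq; omega

lemma image_up_low {b : ℕ} {p : Finset (ℕ × ℕ)} (h : ∀ q ∈ p, q.2 ≤ b) :
    p.image (upMap b) = p := by
  have h2 : p.image (upMap b) = p.image id :=
    Finset.image_congr fun q hq => upMap_fix (h q (Finset.mem_coe.1 hq))
  rw [h2, Finset.image_id]

lemma ins_placement {k n M b : ℕ} {C : Finset (Finset (ℕ × ℕ))} {p : Finset (ℕ × ℕ)}
    (hk : 1 ≤ k) (hpl : IsFreePlacement k n M p) (hpC : p ∈ C) (hb : ¬ spannedB C b) :
    IsFreePlacement k n (M + 1) (p.image (upMap b)) := by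
  rcases mer_dichot_up hk hpl hpC hb with hlow | hhigh
  · rw [image_up_low hlow]
    exact placement_mono (by omega) hpl
  · rcases hpl with ⟨c, r, hc1, hck, hr1, hrM, rfl⟩ | ⟨c, r, hc1, hcn, hr1, hrk, rfl⟩
    · have hbr : b + 1 ≤ r := by
        have : (c + 0, r) ∈ horizKmer k c r := mem_image.2 ⟨0, mem_range.2 (by omega), rfl⟩
        exact hhigh _ this
      refine Or.inl ⟨c, r + 1, hc1, hck, by omega, by omega, ?_⟩
      unfold horizKmer
      rw [Finset.image_image]
      apply Finset.image_congr
      intro i _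
      simp only [Function.comp_apply, upMap, if_pos (by omega : b + 1 ≤ (c + i, r).2)]
    · have hbr : b + 1 ≤ r := by
        have : (c, r + 0) ∈ vertKmer k c r := mem_image.2 ⟨0, mem_range.2 (by omega), rfl⟩
        have := hhigh _ this; simpa using this
      refine Or.inr ⟨c, r + 1, hc1, hcn, by omega, by omega, ?_⟩
      unfold vertKmer
      rw [Finset.image_image]
      apply Finset.image_congr
      intro i hi
      simp only [Function.comp_apply, upMap, if_pos (by simp; omega : b + 1 ≤ (c, r + i).2)]
      simp [Nat.add_right_comm]

lemma ins_config {k n M s b : ℕ} {C : Finset (Finset (ℕ × ℕ))}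
    (hk : 1 ≤ k) (hC : IsFreeConfig k n M s C) (hb : ¬ spannedB C b) :
    IsFreeConfig k n (M + 1) s (insRow b C) := by
  obtain ⟨hcard, hpl, hdisj⟩ := hC
  refine ⟨?_, ?_, ?_⟩
  · rw [insRow, Finset.card_image_of_injective _ (Finset.image_injective (upMap_inj b)), hcard]
  · intro p' hp'
    obtain ⟨p, hpC, rfl⟩ := mem_image.1 hp'
    exact ins_placement hk (hpl p hpC) hpC hb
  · intro x hx y hy hxy
    obtain ⟨p, hpC, rfl⟩ := mem_image.1 (mem_coe.1 hx)
    obtain ⟨p', hp'C, rfl⟩ := mem_image.1 (mem_coe.1 hy)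
    have hpp' : p ≠ p' := fun h => hxy (by rw [h])
    have this : Disjoint p p' := hdisj (mem_coe.2 hpC) (mem_coe.2 hp'C) hpp'
    rw [Finset.disjoint_left] at this ⊢
    rintro q hq1 hq2
    obtain ⟨a, ha, rfl⟩ := mem_image.1 hq1
    obtain ⟨a', ha', heq⟩ := mem_image.1 hq2
    exact this ha (by rwa [upMap_inj b heq] at ha')

lemma mem_image_up_row_iff {b r : ℕ} {p : Finset (ℕ × ℕ)} (hrb : r ≤ b) :
    (∃ q ∈ p.image (upMap b), q.2 = r) ↔ ∃ q ∈ p, q.2 = r := by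
  constructor
  · rintro ⟨q', hq', hr⟩
    obtain ⟨q, hq, rfl⟩ := mem_image.1 hq'
    refine ⟨q, hq, ?_⟩
    unfold upMap at hr
    split at hr
    · simp at hr; omega
    · exact hr
  · rintro ⟨q, hq, rfl⟩
    exact ⟨q, mem_image.2 ⟨q, hq, upMap_fix hrb⟩, rfl⟩

lemma ins_occ_iff {b r : ℕ} {C : Finset (Finset (ℕ × ℕ))} (hrb : r ≤ b) :
    occRow (insRow b C) r ↔ occRow C r := by
  constructor
  · rintro ⟨p', hp', hex⟩
    obtain ⟨p, hpC, rfl⟩ := mem_image.1 hp'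
    exact ⟨p, hpC, (mem_image_up_row_iff hrb).1 hex⟩
  · rintro ⟨p, hpC, hex⟩
    exact ⟨p.image (upMap b), mem_image.2 ⟨p, hpC, rfl⟩, (mem_image_up_row_iff hrb).2 hex⟩

lemma ins_not_occ_b1 {b : ℕ} {C : Finset (Finset (ℕ × ℕ))} :
    ¬ occRow (insRow b C) (b + 1) := by
  rintro ⟨p', hp', q', hq', hr⟩
  obtain ⟨p, hpC, rfl⟩ := mem_image.1 hp'
  obtain ⟨q, hq, rfl⟩ := mem_image.1 hq'
  unfold upMap at hr
  split at hr <;> simp_all <;> omega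

lemma ins_spanned_iff {b c : ℕ} {C : Finset (Finset (ℕ × ℕ))} (hc : c + 1 ≤ b) :
    spannedB (insRow b C) c ↔ spannedB C c := by
  constructor
  · rintro ⟨p', hp', h1, h2⟩
    obtain ⟨p, hpC, rfl⟩ := mem_image.1 hp'
    exact ⟨p, hpC, (mem_image_up_row_iff (by omega)).1 h1, (mem_image_up_row_iff hc).1 h2⟩
  · rintro ⟨p, hpC, h1, h2⟩
    exact ⟨p.image (upMap b), mem_image.2 ⟨p, hpC, rfl⟩,
      (mem_image_up_row_iff (by omega)).2 h1, (mem_image_up_row_iff hc).2 h2⟩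

lemma ins_occ_top {b M : ℕ} {C : Finset (Finset (ℕ × ℕ))} (hbM : b + 1 ≤ M)
    (h : occRow C M) : occRow (insRow b C) (M + 1) := by
  obtain ⟨p, hpC, q, hq, hr⟩ := h
  refine ⟨p.image (upMap b), mem_image.2 ⟨p, hpC, rfl⟩, upMap b q, mem_image.2 ⟨q, hq, rfl⟩, ?_⟩
  unfold upMap
  rw [if_pos (by omega)]
  simp [hr]

lemma ins_anchored {b ρ : ℕ} {C : Finset (Finset (ℕ × ℕ))} (hρb : ρ ≤ b)
    (h : BottomAnchored C ρ) : BottomAnchored (insRow b C) ρ := by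
  obtain ⟨⟨p0, hp0, hex0⟩, hall⟩ := h
  constructor
  · exact ⟨p0.image (upMap b), mem_image.2 ⟨p0, hp0, rfl⟩, (mem_image_up_row_iff hρb).2 hex0⟩
  · rintro p' hp' hex
    obtain ⟨p, hpC, rfl⟩ := mem_image.1 hp'
    have hocc := (mem_image_up_row_iff hρb).1 hex
    obtain ⟨htouch, hge⟩ := hall p hpC hocc
    refine ⟨(mem_image_up_row_iff hρb).2 htouch, ?_⟩
    rintro q' hq'
    obtain ⟨q, hq, rfl⟩ := mem_image.1 hq'
    exact le_trans (hge q hq) (upMap_row_ge b q)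

lemma ins_barred {b h : ℕ} {C : Finset (Finset (ℕ × ℕ))} (hhb : h ≤ b)
    (hbar : Barred C h) : Barred (insRow b C) h := by
  obtain ⟨p, hpC, ⟨q1, hq1, hr1⟩, ⟨q2, hq2, hr2⟩⟩ := hbar
  refine ⟨p.image (upMap b), mem_image.2 ⟨p, hpC, rfl⟩,
    ⟨q1, mem_image.2 ⟨q1, hq1, upMap_fix (by omega)⟩, hr1⟩,
    ⟨q2, mem_image.2 ⟨q2, hq2, upMap_fix (by omega)⟩, hr2⟩⟩

lemma downMap_fix {b : ℕ} {q : ℕ × ℕ} (h : q.2 ≤ b + 1) : downMap b q = q := by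
  unfold downMap; rw [if_neg]; omega

lemma downMap_row_ge {b ρ : ℕ} {q : ℕ × ℕ} (h1 : ρ ≤ q.2) (h2 : ρ ≤ b) :
    ρ ≤ (downMap b q).2 := by
  unfold downMap; split
  · simp only; omega
  · omega

lemma up_down_cancel (b : ℕ) (q : ℕ × ℕ) : downMap b (upMap b q) = q := by
  rcases q with ⟨c, r⟩
  unfold upMap downMap
  by_cases h : b + 1 ≤ r
  · rw [if_pos h]; simp only; rw [if_pos (by omega)]; simp
  · rw [if_neg h]; rw [if_neg (by simp; omega)]

lemma down_up_cancel {b : ℕ} {q : ℕ × ℕ} (h : q.2 ≠ b + 1) : upMap b (downMap b q) = q := by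
  rcases q with ⟨c, r⟩
  unfold upMap downMap
  simp only at h
  by_cases h2 : b + 2 ≤ r
  · rw [if_pos h2]; simp only; rw [if_pos (by omega)]
    simp; omega
  · rw [if_neg h2]; rw [if_neg (by simp; omega)]

lemma no_site_b1 {b : ℕ} {C : Finset (Finset (ℕ × ℕ))} (hne : ¬ occRow C (b + 1))
    {p : Finset (ℕ × ℕ)} (hpC : p ∈ C) {q : ℕ × ℕ} (hq : q ∈ p) : q.2 ≠ b + 1 :=
  fun h => hne ⟨p, hpC, q, hq, h⟩

lemma mer_dichot_down {k n M b : ℕ} {C : Finset (Finset (ℕ × ℕ))} {p : Finset (ℕ × ℕ)}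
    (hk : 1 ≤ k) (hpl : IsFreePlacement k n M p) (hpC : p ∈ C) (hne : ¬ occRow C (b + 1)) :
    (∀ q ∈ p, q.2 ≤ b) ∨ (∀ q ∈ p, b + 2 ≤ q.2) := by
  by_cases hex : ∃ q ∈ p, b + 1 ≤ q.2
  · right
    obtain ⟨q2, hq2, hq2b⟩ := hex
    have hq2b' : b + 2 ≤ q2.2 := by
      have := no_site_b1 hne hpC hq2; omega
    intro q hq
    by_contra hlt
    push_neg at hlt
    have hqb : q.2 ≤ b := by have := no_site_b1 hne hpC hq; omega
    obtain ⟨q', hq', hr'⟩ := placement_between hk hpl hq hq2 (le_trans hqb (by omega))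
      (by omega) (r := b + 1)
    exact no_site_b1 hne hpC hq' hr'
  · left; intro q hq
    push_neg at hex
    have := hex q hq; omega

lemma image_down_low {b : ℕ} {p : Finset (ℕ × ℕ)} (h : ∀ q ∈ p, q.2 ≤ b + 1) :
    p.image (downMap b) = p := by
  have h2 : p.image (downMap b) = p.image id :=
    Finset.image_congr fun q hq => downMap_fix (h q (Finset.mem_coe.1 hq))
  rw [h2, Finset.image_id]

lemma del_placement {k n M b : ℕ} {C : Finset (Finset (ℕ × ℕ))} {p : Finset (ℕ × ℕ)}
    (hk : 1 ≤ k) (hbM : b + 2 ≤ M) (hpl : IsFreePlacement k n M p) (hpC : p ∈ C)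
    (hne : ¬ occRow C (b + 1)) :
    IsFreePlacement k n (M - 1) (p.image (downMap b)) := by
  rcases mer_dichot_down hk hpl hpC hne with hlow | hhigh
  · rw [image_down_low (fun q hq => le_trans (hlow q hq) (by omega))]
    rcases hpl with ⟨c, r, hc1, hck, hr1, hrM, rfl⟩ | ⟨c, r, hc1, hcn, hr1, hrk, rfl⟩
    · have hrb : r ≤ b := by
        have : (c + 0, r) ∈ horizKmer k c r := mem_image.2 ⟨0, mem_range.2 (by omega), rfl⟩
        exact hlow _ this
      exact Or.inl ⟨c, r, hc1, hck, hr1, by omega, rfl⟩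
    · have hrb : r + (k - 1) ≤ b := by
        have : (c, r + (k - 1)) ∈ vertKmer k c r :=
          mem_image.2 ⟨k - 1, mem_range.2 (by omega), rfl⟩
        have := hlow _ this; simpa using this
      exact Or.inr ⟨c, r, hc1, hcn, hr1, by omega, rfl⟩
  · rcases hpl with ⟨c, r, hc1, hck, hr1, hrM, rfl⟩ | ⟨c, r, hc1, hcn, hr1, hrk, rfl⟩
    · have hbr : b + 2 ≤ r := by
        have : (c + 0, r) ∈ horizKmer k c r := mem_image.2 ⟨0, mem_range.2 (by omega), rfl⟩
        exact hhigh _ this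
      refine Or.inl ⟨c, r - 1, hc1, hck, by omega, by omega, ?_⟩
      unfold horizKmer
      rw [Finset.image_image]
      apply Finset.image_congr
      intro i _
      simp only [Function.comp_apply, downMap, if_pos (by omega : b + 2 ≤ (c + i, r).2)]
    · have hbr : b + 2 ≤ r := by
        have : (c, r + 0) ∈ vertKmer k c r := mem_image.2 ⟨0, mem_range.2 (by omega), rfl⟩
        have := hhigh _ this; simpa using this
      refine Or.inr ⟨c, r - 1, hc1, hcn, by omega, by omega, ?_⟩
      unfold vertKmer
      rw [Finset.image_image]
      apply Finset.image_congr
      intro i hi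
      simp only [Function.comp_apply, downMap, if_pos (by simp; omega : b + 2 ≤ (c, r + i).2)]
      simp; omega

lemma mer_down_up {b : ℕ} {C : Finset (Finset (ℕ × ℕ))} (hne : ¬ occRow C (b + 1))
    {p : Finset (ℕ × ℕ)} (hpC : p ∈ C) :
    (p.image (downMap b)).image (upMap b) = p := by
  rw [Finset.image_image]
  have h2 : p.image (upMap b ∘ downMap b) = p.image id :=
    Finset.image_congr fun q hq => down_up_cancel (no_site_b1 hne hpC (Finset.mem_coe.1 hq))
  rw [h2, Finset.image_id]

lemma ins_del_cancel (b : ℕ) (C : Finset (Finset (ℕ × ℕ))) :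
    delRow b (insRow b C) = C := by
  unfold delRow insRow
  rw [Finset.image_image]
  have h2 : C.image ((fun p => p.image (downMap b)) ∘ fun p => p.image (upMap b)) = C.image id := by
    apply Finset.image_congr
    intro p _
    simp only [Function.comp_apply, id_eq, Finset.image_image]
    have : p.image (downMap b ∘ upMap b) = p.image id :=
      Finset.image_congr fun q _ => up_down_cancel b q
    rw [this, Finset.image_id]
  rw [h2, Finset.image_id]

lemma del_ins_cancel {b : ℕ} {C : Finset (Finset (ℕ × ℕ))} (hne : ¬ occRow C (b + 1)) :
    insRow b (delRow b C) = C := by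
  unfold delRow insRow
  rw [Finset.image_image]
  have h2 : C.image ((fun p => p.image (upMap b)) ∘ fun p => p.image (downMap b)) = C.image id := by
    apply Finset.image_congr
    intro p hp
    simp only [Function.comp_apply, id_eq]
    exact mer_down_up hne (Finset.mem_coe.1 hp)
  rw [h2, Finset.image_id]

lemma del_config {k n M s b : ℕ} {C : Finset (Finset (ℕ × ℕ))}
    (hk : 1 ≤ k) (hbM : b + 2 ≤ M) (hC : IsFreeConfig k n M s C) (hne : ¬ occRow C (b + 1)) :
    IsFreeConfig k n (M - 1) s (delRow b C) := by
  obtain ⟨hcard, hpl, hdisj⟩ := hC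
  refine ⟨?_, ?_, ?_⟩
  · rw [delRow, Finset.card_image_of_injOn, hcard]
    intro p hp p' hp' heq
    have := congrArg (fun x => Finset.image (upMap b) x) heq
    simpa [mer_down_up hne (Finset.mem_coe.1 hp), mer_down_up hne (Finset.mem_coe.1 hp')]
      using this
  · intro p' hp'
    obtain ⟨p, hpC, rfl⟩ := mem_image.1 hp'
    exact del_placement hk hbM (hpl p hpC) hpC hne
  · intro x hx y hy hxy
    obtain ⟨p, hpC, rfl⟩ := mem_image.1 (mem_coe.1 hx)
    obtain ⟨p', hp'C, rfl⟩ := mem_image.1 (mem_coe.1 hy)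
    have hpp' : p ≠ p' := fun h => hxy (by rw [h])
    have hd : Disjoint p p' := hdisj (mem_coe.2 hpC) (mem_coe.2 hp'C) hpp'
    rw [Finset.disjoint_left] at hd ⊢
    rintro q hq1 hq2
    obtain ⟨a, ha, rfl⟩ := mem_image.1 hq1
    obtain ⟨a', ha', heq⟩ := mem_image.1 hq2
    have : a' = a := by
      have h1 := down_up_cancel (no_site_b1 hne hpC ha)
      have h2 := down_up_cancel (no_site_b1 hne hp'C ha')
      rw [heq] at h2
      rw [← h1, ← h2]
    exact hd ha (this ▸ ha')

lemma mem_image_down_row_iff {b r : ℕ} {p : Finset (ℕ × ℕ)} (hrb : r ≤ b) :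
    (∃ q ∈ p.image (downMap b), q.2 = r) ↔ ∃ q ∈ p, q.2 = r := by
  constructor
  · rintro ⟨q', hq', hr⟩
    obtain ⟨q, hq, rfl⟩ := mem_image.1 hq'
    refine ⟨q, hq, ?_⟩
    unfold downMap at hr
    split at hr
    · simp at hr; omega
    · exact hr
  · rintro ⟨q, hq, rfl⟩
    exact ⟨q, mem_image.2 ⟨q, hq, downMap_fix (by omega)⟩, rfl⟩

lemma del_occ_iff {b r : ℕ} {C : Finset (Finset (ℕ × ℕ))} (hrb : r ≤ b) :
    occRow (delRow b C) r ↔ occRow C r := by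
  constructor
  · rintro ⟨p', hp', hex⟩
    obtain ⟨p, hpC, rfl⟩ := mem_image.1 hp'
    exact ⟨p, hpC, (mem_image_down_row_iff hrb).1 hex⟩
  · rintro ⟨p, hpC, hex⟩
    exact ⟨p.image (downMap b), mem_image.2 ⟨p, hpC, rfl⟩, (mem_image_down_row_iff hrb).2 hex⟩

lemma del_spanned_iff {b c : ℕ} {C : Finset (Finset (ℕ × ℕ))} (hc : c + 1 ≤ b) :
    spannedB (delRow b C) c ↔ spannedB C c := by
  constructor
  · rintro ⟨p', hp', h1, h2⟩
    obtain ⟨p, hpC, rfl⟩ := mem_image.1 hp'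
    exact ⟨p, hpC, (mem_image_down_row_iff (by omega)).1 h1, (mem_image_down_row_iff hc).1 h2⟩
  · rintro ⟨p, hpC, h1, h2⟩
    exact ⟨p.image (downMap b), mem_image.2 ⟨p, hpC, rfl⟩,
      (mem_image_down_row_iff (by omega)).2 h1, (mem_image_down_row_iff hc).2 h2⟩

lemma del_occ_top {b M : ℕ} {C : Finset (Finset (ℕ × ℕ))} (hbM : b + 2 ≤ M)
    (h : occRow C M) : occRow (delRow b C) (M - 1) := by
  obtain ⟨p, hpC, q, hq, hr⟩ := h
  refine ⟨p.image (downMap b), mem_image.2 ⟨p, hpC, rfl⟩, downMap b q,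
    mem_image.2 ⟨q, hq, rfl⟩, ?_⟩
  unfold downMap
  rw [if_pos (by omega)]
  simp [hr]

lemma del_anchored {b ρ : ℕ} {C : Finset (Finset (ℕ × ℕ))} (hρb : ρ ≤ b)
    (h : BottomAnchored C ρ) : BottomAnchored (delRow b C) ρ := by
  obtain ⟨⟨p0, hp0, hex0⟩, hall⟩ := h
  constructor
  · exact ⟨p0.image (downMap b), mem_image.2 ⟨p0, hp0, rfl⟩, (mem_image_down_row_iff hρb).2 hex0⟩
  · rintro p' hp' hex
    obtain ⟨p, hpC, rfl⟩ := mem_image.1 hp'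
    have hocc := (mem_image_down_row_iff hρb).1 hex
    obtain ⟨htouch, hge⟩ := hall p hpC hocc
    refine ⟨(mem_image_down_row_iff hρb).2 htouch, ?_⟩
    rintro q' hq'
    obtain ⟨q, hq, rfl⟩ := mem_image.1 hq'
    exact downMap_row_ge (hge q hq) hρb

lemma del_barred {b h : ℕ} {C : Finset (Finset (ℕ × ℕ))} (hhb : h ≤ b)
    (hbar : Barred C h) : Barred (delRow b C) h := by
  obtain ⟨p, hpC, ⟨q1, hq1, hr1⟩, ⟨q2, hq2, hr2⟩⟩ := hbar
  refine ⟨p.image (downMap b), mem_image.2 ⟨p, hpC, rfl⟩,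
    ⟨q1, mem_image.2 ⟨q1, hq1, downMap_fix (by omega)⟩, hr1⟩,
    ⟨q2, mem_image.2 ⟨q2, hq2, downMap_fix (by omega)⟩, hr2⟩⟩

/-! ### GoodConf transport -/

lemma GoodConf.occ_top {k n t s M : ℕ} {C : Finset (Finset (ℕ × ℕ))}
    (h : GoodConf k n t s M C) : occRow C M := h.2.2.2

lemma GoodConf.occ_h {k n t s M : ℕ} {C : Finset (Finset (ℕ × ℕ))}
    (h : GoodConf k n t s M C) : occRow C (t * k + 1) := by
  obtain ⟨p, hpC, hov, _⟩ := h.2.2.1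
  exact ⟨p, hpC, hov⟩

lemma GoodConf.M_pos {k n t s M : ℕ} (hk : 1 ≤ k) {C : Finset (Finset (ℕ × ℕ))}
    (h : GoodConf k n t s M C) : 1 ≤ M := by
  obtain ⟨p, hpC, q, hq, hr⟩ := h.occ_top
  have := placement_row_pos hk (h.1.2.1 p hpC) hq
  omega

lemma anchor_le {k t j' : ℕ} (hk : 1 ≤ k) (hj' : j' < t) : j' * k + 1 ≤ t * k + 1 := by
  have : j' * k ≤ t * k := Nat.mul_le_mul_right k (by omega)
  omega

lemma mem_leadSet {C : Finset (Finset (ℕ × ℕ))} {h M b : ℕ} :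
    b ∈ leadSet C h M ↔ (h ≤ b ∧ b ≤ M - 1) ∧ ¬ spannedB C b ∧ occRow C b := by
  unfold leadSet
  rw [Finset.mem_filter, Finset.mem_Icc]

lemma mem_gapSet {C : Finset (Finset (ℕ × ℕ))} {h M b : ℕ} :
    b ∈ gapSet C h M ↔ b ∈ leadSet C h M ∧ ¬ occRow C (b + 1) := by
  unfold gapSet
  rw [Finset.mem_filter]

lemma ins_good {k n t s M b : ℕ} {C : Finset (Finset (ℕ × ℕ))}
    (hk : 1 ≤ k) (hG : GoodConf k n t s M C) (hb : b ∈ leadSet C (t * k + 1) M) :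
    GoodConf k n t s (M + 1) (insRow b C) := by
  obtain ⟨⟨hb1, hb2⟩, hnsp, hocc⟩ := mem_leadSet.1 hb
  have hM1 : 1 ≤ M := hG.M_pos hk
  have hbM : b + 1 ≤ M := by omega
  refine ⟨ins_config hk hG.1 hnsp, ?_, ?_, ?_⟩
  · intro j' hj'
    exact ins_anchored (le_trans (anchor_le hk hj') hb1) (hG.2.1 j' hj')
  · exact ins_barred hb1 hG.2.2.1
  · exact ins_occ_top hbM hG.occ_top

lemma gap_b2M {k n t s M b : ℕ} (hk : 1 ≤ k) {C : Finset (Finset (ℕ × ℕ))}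
    (hG : GoodConf k n t s M C) (hb : b ∈ gapSet C (t * k + 1) M) : b + 2 ≤ M := by
  obtain ⟨hlead, hne⟩ := mem_gapSet.1 hb
  obtain ⟨⟨hb1, hb2⟩, _, _⟩ := mem_leadSet.1 hlead
  have hM1 : 1 ≤ M := hG.M_pos hk
  have : M ≠ b + 1 := fun h => hne (h ▸ hG.occ_top)
  omega

lemma del_good {k n t s M b : ℕ} {C : Finset (Finset (ℕ × ℕ))}
    (hk : 1 ≤ k) (hG : GoodConf k n t s M C) (hb : b ∈ gapSet C (t * k + 1) M) :
    GoodConf k n t s (M - 1) (delRow b C) := by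
  obtain ⟨hlead, hne⟩ := mem_gapSet.1 hb
  obtain ⟨⟨hb1, hb2⟩, hnsp, hocc⟩ := mem_leadSet.1 hlead
  have hbM : b + 2 ≤ M := gap_b2M hk hG hb
  refine ⟨del_config hk hbM hG.1 hne, ?_, ?_, ?_⟩
  · intro j' hj'
    exact del_anchored (le_trans (anchor_le hk hj') hb1) (hG.2.1 j' hj')
  · exact del_barred hb1 hG.2.2.1
  · exact del_occ_top hbM hG.occ_top

/-! ### Index facts and transport -/

lemma idx_mono {C : Finset (Finset (ℕ × ℕ))} {h M a b : ℕ} (hab : a ≤ b) :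
    idxL C h M a ≤ idxL C h M b := by
  unfold idxL
  apply Finset.card_le_card
  intro x hx
  rw [Finset.mem_filter] at hx ⊢
  exact ⟨hx.1, lt_of_lt_of_le hx.2 hab⟩

lemma idx_strict {C : Finset (Finset (ℕ × ℕ))} {h M a b : ℕ}
    (ha : a ∈ leadSet C h M) (hab : a < b) : idxL C h M a < idxL C h M b := by
  apply Finset.card_lt_card
  rw [Finset.ssubset_def]
  constructor
  · intro x hx
    rw [Finset.mem_filter] at hx ⊢
    exact ⟨hx.1, lt_trans hx.2 hab⟩
  · intro hsub
    have : a ∈ (leadSet C h M).filter (· < a) :=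
      hsub (Finset.mem_filter.2 ⟨ha, hab⟩)
    exact absurd (Finset.mem_filter.1 this).2 (lt_irrefl a)

lemma idx_lt_card {C : Finset (Finset (ℕ × ℕ))} {h M a : ℕ}
    (ha : a ∈ leadSet C h M) : idxL C h M a < (leadSet C h M).card := by
  apply Finset.card_lt_card
  rw [Finset.ssubset_def]
  refine ⟨Finset.filter_subset _ _, fun hsub => ?_⟩
  exact absurd (Finset.mem_filter.1 (hsub ha)).2 (lt_irrefl a)

lemma idx_injOn {C : Finset (Finset (ℕ × ℕ))} {h M : ℕ} :
    Set.InjOn (idxL C h M) (leadSet C h M) := by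
  intro a ha b hb hab
  by_contra hne
  rcases Nat.lt_or_ge a b with hlt | hge
  · exact absurd hab (Nat.ne_of_lt (idx_strict (Finset.mem_coe.1 ha) hlt))
  · have : b < a := by omega
    exact absurd hab.symm (Nat.ne_of_lt (idx_strict (Finset.mem_coe.1 hb) this))

lemma idx_surj {C : Finset (Finset (ℕ × ℕ))} {h M ℓ : ℕ}
    (hℓ : ℓ < (leadSet C h M).card) : ∃ b ∈ leadSet C h M, idxL C h M b = ℓ := by
  have hsub : (leadSet C h M).image (idxL C h M) ⊆ Finset.range (leadSet C h M).card := by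
    intro x hx
    obtain ⟨b, hb, rfl⟩ := mem_image.1 hx
    exact Finset.mem_range.2 (idx_lt_card hb)
  have hcard : (Finset.range (leadSet C h M).card).card ≤
      ((leadSet C h M).image (idxL C h M)).card := by
    rw [Finset.card_range, Finset.card_image_of_injOn idx_injOn]
  have heq := Finset.eq_of_subset_of_card_le hsub hcard
  have hmem : ℓ ∈ (leadSet C h M).image (idxL C h M) := by
    rw [heq]; exact Finset.mem_range.2 hℓ
  obtain ⟨b, hb, hbℓ⟩ := mem_image.1 hmem
  exact ⟨b, hb, hbℓ⟩

lemma lead_filter_congr {C C' : Finset (Finset (ℕ × ℕ))} {h M M' b : ℕ}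
    (Hocc : ∀ r, r ≤ b → (occRow C r ↔ occRow C' r))
    (Hsp : ∀ c, c + 1 ≤ b → (spannedB C c ↔ spannedB C' c))
    (hbM : b ≤ M) (hbM' : b ≤ M') :
    (leadSet C h M).filter (· < b) = (leadSet C' h M').filter (· < b) := by
  ext c
  simp only [Finset.mem_filter, mem_leadSet]
  constructor
  · rintro ⟨⟨⟨h1, h2⟩, h3, h4⟩, h5⟩
    exact ⟨⟨⟨h1, by omega⟩, fun hs => h3 ((Hsp c (by omega)).2 hs),
      (Hocc c (by omega)).1 h4⟩, h5⟩
  · rintro ⟨⟨⟨h1, h2⟩, h3, h4⟩, h5⟩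
    exact ⟨⟨⟨h1, by omega⟩, fun hs => h3 ((Hsp c (by omega)).1 hs),
      (Hocc c (by omega)).2 h4⟩, h5⟩

lemma gap_filter_congr {C C' : Finset (Finset (ℕ × ℕ))} {h M M' b : ℕ}
    (Hocc : ∀ r, r ≤ b → (occRow C r ↔ occRow C' r))
    (Hsp : ∀ c, c + 1 ≤ b → (spannedB C c ↔ spannedB C' c))
    (hbM : b ≤ M) (hbM' : b ≤ M') :
    (gapSet C h M).filter (· < b) = (gapSet C' h M').filter (· < b) := by
  have hl := lead_filter_congr (h := h) Hocc Hsp hbM hbM'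
  ext c
  simp only [Finset.mem_filter, mem_gapSet]
  constructor
  · rintro ⟨⟨h1, h2⟩, h5⟩
    have hc' : c ∈ (leadSet C' h M').filter (· < b) := by
      rw [← hl]; exact Finset.mem_filter.2 ⟨h1, h5⟩
    exact ⟨⟨(Finset.mem_filter.1 hc').1, fun ho => h2 ((Hocc (c + 1) (by omega)).2 ho)⟩, h5⟩
  · rintro ⟨⟨h1, h2⟩, h5⟩
    have hc' : c ∈ (leadSet C h M).filter (· < b) := by
      rw [hl]; exact Finset.mem_filter.2 ⟨h1, h5⟩
    exact ⟨⟨(Finset.mem_filter.1 hc').1, fun ho => h2 ((Hocc (c + 1) (by omega)).1 ho)⟩, h5⟩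

lemma idx_congr {C C' : Finset (Finset (ℕ × ℕ))} {h M M' b : ℕ}
    (Hocc : ∀ r, r ≤ b → (occRow C r ↔ occRow C' r))
    (Hsp : ∀ c, c + 1 ≤ b → (spannedB C c ↔ spannedB C' c))
    (hbM : b ≤ M) (hbM' : b ≤ M') :
    idxL C h M b = idxL C' h M' b := by
  unfold idxL
  rw [lead_filter_congr (h := h) Hocc Hsp hbM hbM']

/-! ### Counting lemmas -/

lemma low_count {k n t s M j : ℕ} {C : Finset (Finset (ℕ × ℕ))}
    (hk : 1 ≤ k) (hG : GoodConf k n t s M C) :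
    t + 1 ≤ (C.filter fun p => ∃ q ∈ p, q.2 ≤ t * k + 1).card := by
  have key : ∀ i : ℕ, ∃ p, i ≤ t → (p ∈ C ∧ ∃ q ∈ p, q.2 = i * k + 1) := by
    intro i
    by_cases hi : i ≤ t
    · rcases eq_or_lt_of_le hi with rfl | hlt
      · obtain ⟨p, hpC, hov, _⟩ := hG.2.2.1
        exact ⟨p, fun _ => ⟨hpC, hov⟩⟩
      · obtain ⟨⟨p, hpC, hex⟩, _⟩ := hG.2.1 i hlt
        exact ⟨p, fun _ => ⟨hpC, hex⟩⟩
    · exact ⟨∅, fun h => absurd h hi⟩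
  choose f hf using key
  have := Finset.card_le_card_of_injOn f (s := Finset.range (t + 1))
    (t := C.filter fun p => ∃ q ∈ p, q.2 ≤ t * k + 1) ?_ ?_
  · simpa using this
  · intro i hi
    have hi' : i ≤ t := by have := Finset.mem_range.1 hi; omega
    obtain ⟨hpC, q, hq, hqr⟩ := hf i hi'
    refine Finset.mem_filter.2 ⟨hpC, q, hq, ?_⟩
    have : i * k ≤ t * k := Nat.mul_le_mul_right k hi'
    omega
  · intro a ha b hb hab
    by_contra hne
    have ha' : a ≤ t := by have := Finset.mem_range.1 (Finset.mem_coe.1 ha); omega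
    have hb' : b ≤ t := by have := Finset.mem_range.1 (Finset.mem_coe.1 hb); omega
    obtain ⟨haC, qa, hqa, hqar⟩ := hf a ha'
    obtain ⟨hbC, qb, hqb, hqbr⟩ := hf b hb'
    have hspan1 := placement_span hk (hG.1.2.1 _ haC) hqa (hab ▸ hqb)
    have hspan2 := placement_span hk (hG.1.2.1 _ haC) (hab ▸ hqb) hqa
    rcases Nat.lt_or_ge a b with hlt | hge
    · have hmul : (a + 1) * k = a * k + k := by ring
      have : (a + 1) * k ≤ b * k := Nat.mul_le_mul_right k (by omega)
      omega
    · have hmul : (b + 1) * k = b * k + k := by ring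
      have : (b + 1) * k ≤ a * k := Nat.mul_le_mul_right k (by omega)
      omega

lemma high_low_split {k n M s h : ℕ} {C : Finset (Finset (ℕ × ℕ))}
    (hC : IsFreeConfig k n M s C) :
    (C.filter fun p => ∀ q ∈ p, h < q.2).card
      + (C.filter fun p => ∃ q ∈ p, q.2 ≤ h).card = s := by
  have hcong : (C.filter fun p => ∃ q ∈ p, q.2 ≤ h)
      = (C.filter fun p => ¬ ∀ q ∈ p, h < q.2) := by
    apply Finset.filter_congr
    intro p _
    constructor
    · rintro ⟨q, hq, hle⟩ 
      intro hall
      exact absurd (hall q hq) (by omega)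
    · intro hn
      push_neg at hn
      obtain ⟨q, hq, hle⟩ := hn
      exact ⟨q, hq, by omega⟩
  rw [hcong, Finset.card_filter_add_card_filter_not, hC.1]

lemma high_card_le {k n t s M j : ℕ} {C : Finset (Finset (ℕ × ℕ))}
    (hk : 1 ≤ k) (hG : GoodConf k n t s M C) (hs : s = t + 2 + j) :
    (C.filter fun p => ∀ q ∈ p, t * k + 1 < q.2).card ≤ j + 1 := by
  have h1 := high_low_split (h := t * k + 1) hG.1
  have h2 := low_count (j := j) hk hG
  omega

lemma lead_card_le {k n t s M : ℕ} {C : Finset (Finset (ℕ × ℕ))}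
    (hk : 1 ≤ k) (hG : GoodConf k n t s M C) :
    (leadSet C (t * k + 1) M).card ≤ (C.filter fun p => ∀ q ∈ p, t * k + 1 < q.2).card := by
  set h := t * k + 1
  have key : ∀ b : ℕ, ∃ p, b ∈ leadSet C h M →
      (p ∈ C ∧ (∀ q' ∈ p, b < q'.2) ∧
        ∃ q ∈ p, b < q.2 ∧ ∀ r, b < r → r < q.2 → ¬ occRow C r) := by
    intro b
    by_cases hb : b ∈ leadSet C h M
    · obtain ⟨⟨hb1, hb2⟩, hnsp, hocc⟩ := mem_leadSet.1 hb
      have hM1 : 1 ≤ M := hG.M_pos hk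
      have hbM : b + 1 ≤ M := by omega
      have hex : ∃ d, occRow C (b + 1 + d) := ⟨M - (b + 1), by
        have : b + 1 + (M - (b + 1)) = M := by omega
        rw [this]; exact hG.occ_top⟩
      set d0 := Nat.find hex with hd0
      have hoccr : occRow C (b + 1 + d0) := Nat.find_spec hex
      obtain ⟨p, hpC, q, hq, hqr⟩ := hoccr
      refine ⟨p, fun _ => ⟨hpC, ?_, q, hq, by omega, ?_⟩⟩
      · intro q' hq'
        by_contra hle
        push_neg at hle
        obtain ⟨qb, hqb, hqbr⟩ := placement_between hk (hG.1.2.1 p hpC) hq' hq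
          (r := b) hle (by omega)
        obtain ⟨qb1, hqb1, hqb1r⟩ := placement_between hk (hG.1.2.1 p hpC) hq' hq
          (r := b + 1) (by omega) (by omega)
        exact hnsp ⟨p, hpC, ⟨qb, hqb, hqbr⟩, ⟨qb1, hqb1, hqb1r⟩⟩
      · intro r hr1 hr2 hoccr'
        have : ∃ d', b + 1 + d' = r := ⟨r - (b + 1), by omega⟩
        obtain ⟨d', rfl⟩ := this
        have hd' : d' < d0 := by omega
        exact Nat.find_min hex hd' hoccr'
    · exact ⟨∅, fun h' => absurd h' hb⟩
  choose f hf using key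
  apply Finset.card_le_card_of_injOn f
  · intro b hb
    obtain ⟨hpC, hall, _⟩ := hf b hb
    refine Finset.mem_filter.2 ⟨hpC, fun q hq => ?_⟩
    have hbh : h ≤ b := (mem_leadSet.1 hb).1.1
    exact lt_of_le_of_lt hbh (hall q hq)
  · have aux : ∀ b b', b ∈ leadSet C h M → b' ∈ leadSet C h M → b < b' → f b ≠ f b' := by
      intro b b' hb hb' hlt heq
      obtain ⟨hpC, hall, q, hq, hqb, hmin⟩ := hf b hb
      obtain ⟨hpC', hall', _⟩ := hf b' hb'
      have hocc' : occRow C b' := (mem_leadSet.1 hb').2.2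
      have hqle : q.2 ≤ b' := by
        by_contra hgt
        exact hmin b' hlt (by omega) hocc'
      have : b' < q.2 := hall' q (heq ▸ hq)
      omega
    intro a ha b hb hab
    by_contra hne
    rcases Nat.lt_or_ge a b with hlt | hge
    · exact aux a b (Finset.mem_coe.1 ha) (Finset.mem_coe.1 hb) hlt hab
    · exact aux b a (Finset.mem_coe.1 hb) (Finset.mem_coe.1 ha) (by omega) hab.symm

lemma nogap_bound {k n t s M j : ℕ} {C : Finset (Finset (ℕ × ℕ))}
    (hk : 2 ≤ k) (ht : 1 ≤ t) (hG : GoodConf k n t s M C) (hs : s = t + 2 + j)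
    (hgap : gapSet C (t * k + 1) M = ∅) :
    M + (j + 1) ≤ k * s + (leadSet C (t * k + 1) M).card := by
  set h := t * k + 1 with hh
  have hk1 : 1 ≤ k := by omega
  have hocc_all : ∀ r, h ≤ r → r ≤ M → occRow C r := by
    intro r
    induction r using Nat.strong_induction_on with
    | _ r ih =>
      intro h1 h2
      rcases eq_or_lt_of_le h1 with heq | hlt
      · rw [← heq]; exact hG.occ_h
      · by_contra hno
        have hb : r - 1 ∈ gapSet C h M := by
          rw [mem_gapSet, mem_leadSet]
          refine ⟨⟨⟨by omega, by omega⟩, ?_, ?_⟩, ?_⟩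
          · rintro ⟨p, hpC, _, ⟨q, hq, hqr⟩⟩
            exact hno ⟨p, hpC, q, hq, by omega⟩
          · exact ih (r - 1) (by omega) (by omega) (by omega)
          · rintro ⟨p, hpC, q, hq, hqr⟩
            exact hno ⟨p, hpC, q, hq, by omega⟩
        rw [hgap] at hb
        exact absurd hb (Finset.notMem_empty _)
  have hks : k * s = t * k + 2 * k + j * k := by rw [hs]; ring
  have hjk : j ≤ j * k := Nat.le_mul_of_pos_right j (by omega)
  by_cases hMsmall : M ≤ t * k + k
  · omega
  · push_neg at hMsmall
    set q := (leadSet C h M).card with hq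
    set highF := C.filter fun p => ∀ q ∈ p, h < q.2 with hhighF
    set u := highF.card with hu
    have hsub : Finset.Icc (t * k + k) (M - 1) ⊆
        (leadSet C h M) ∪ highF.biUnion (fun p =>
          (Finset.Icc (t * k + k) (M - 1)).filter fun c =>
            (∃ q ∈ p, q.2 = c) ∧ ∃ q ∈ p, q.2 = c + 1) := by
      intro c hc
      obtain ⟨hc1, hc2⟩ := Finset.mem_Icc.1 hc
      by_cases hcl : c ∈ leadSet C h M
      · exact Finset.mem_union_left _ hcl
      · have hocc : occRow C c := hocc_all c (by omega) (by omega)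
        have hsp : spannedB C c := by
          by_contra hnsp
          exact hcl (mem_leadSet.2 ⟨⟨by omega, hc2⟩, hnsp, hocc⟩)
        obtain ⟨p, hpC, hs1, hs2⟩ := hsp
        apply Finset.mem_union_right
        apply Finset.mem_biUnion.2
        refine ⟨p, ?_, Finset.mem_filter.2 ⟨hc, hs1, hs2⟩⟩
        rw [hhighF, Finset.mem_filter]
        refine ⟨hpC, fun q0 hq0 => ?_⟩
        by_contra hq0h
        push_neg at hq0h
        obtain ⟨q1, hq1, hq1r⟩ := hs2
        have := placement_span hk1 (hG.1.2.1 p hpC) hq0 hq1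
        omega
    have hcard1 : (Finset.Icc (t * k + k) (M - 1)).card ≤
        q + u * (k - 1) := by
      calc (Finset.Icc (t * k + k) (M - 1)).card
          ≤ ((leadSet C h M) ∪ highF.biUnion _).card := Finset.card_le_card hsub
        _ ≤ q + (highF.biUnion _).card := by
              rw [hq]; exact Finset.card_union_le _ _
        _ ≤ q + ∑ p ∈ highF, ((Finset.Icc (t * k + k) (M - 1)).filter fun c =>
              (∃ q ∈ p, q.2 = c) ∧ ∃ q ∈ p, q.2 = c + 1).card := by
              exact Nat.add_le_add_left (Finset.card_biUnion_le) q
        _ ≤ q + ∑ _p ∈ highF, (k - 1) := by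
              apply Nat.add_le_add_left
              apply Finset.sum_le_sum
              intro p hp
              have hpC : p ∈ C := (Finset.mem_filter.1 hp).1
              obtain ⟨lo, hi, hlo1, hlohi, hhik, hhiM, hmem, _⟩ :=
                placement_struct hk1 (hG.1.2.1 p hpC)
              have : ((Finset.Icc (t * k + k) (M - 1)).filter fun c =>
                  (∃ q ∈ p, q.2 = c) ∧ ∃ q ∈ p, q.2 = c + 1) ⊆
                  Finset.Icc lo (lo + (k - 2)) := by
                intro c hc
                obtain ⟨_, ⟨q1, hq1, hq1r⟩, ⟨q2, hq2, hq2r⟩⟩ := Finset.mem_filter.1 hc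
                have e1 := hmem q1 hq1
                have e2 := hmem q2 hq2
                rw [Finset.mem_Icc]
                omega
              calc _ ≤ (Finset.Icc lo (lo + (k - 2))).card := Finset.card_le_card this
                _ = k - 1 := by rw [Nat.card_Icc]; omega
        _ = q + u * (k - 1) := by rw [Finset.sum_const, smul_eq_mul, hu]
    have hIcc : (Finset.Icc (t * k + k) (M - 1)).card = M - (t * k + k) := by
      rw [Nat.card_Icc]; omega
    have hu_le : u ≤ j + 1 := high_card_le hk1 hG hs
    have he1 : u * (k - 1) ≤ (j + 1) * (k - 1) := Nat.mul_le_mul_right _ hu_le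
    have he2 : (j + 1) * k = (j + 1) * (k - 1) + (j + 1) := by
      have hkk : k = (k - 1) + 1 := by omega
      calc (j + 1) * k = (j + 1) * ((k - 1) + 1) := by rw [← hkk]
        _ = (j + 1) * (k - 1) + (j + 1) := by ring
    have he3 : (j + 1) * k = j * k + k := by ring
    omega

/-! ### The involution -/

noncomputable def Tset (h m : ℕ) (S : Finset ℕ) (C : Finset (Finset (ℕ × ℕ))) : Finset ℕ :=
  S ∪ (gapSet C h (m - S.card)).image (idxL C h (m - S.card))

noncomputable def Bins (h m : ℕ) (S : Finset ℕ) (C : Finset (Finset (ℕ × ℕ))) (ℓ : ℕ) :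
    Finset ℕ :=
  (leadSet C h (m - S.card)).filter fun b => idxL C h (m - S.card) b = ℓ

noncomputable def Bdel (h m : ℕ) (S : Finset ℕ) (C : Finset (Finset (ℕ × ℕ))) (ℓ : ℕ) :
    Finset ℕ :=
  (gapSet C h (m - S.card)).filter fun b => idxL C h (m - S.card) b = ℓ

noncomputable def phiAux (h m : ℕ) (S : Finset ℕ) (C : Finset (Finset (ℕ × ℕ))) :
    Finset ℕ × Finset (Finset (ℕ × ℕ)) :=
  if hT : (Tset h m S C).Nonempty then
    if (Tset h m S C).min' hT ∈ S then
      if hB : (Bins h m S C ((Tset h m S C).min' hT)).Nonempty then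
        (S.erase ((Tset h m S C).min' hT),
          insRow ((Bins h m S C ((Tset h m S C).min' hT)).min' hB) C)
      else (S, C)
    else
      if hB : (Bdel h m S C ((Tset h m S C).min' hT)).Nonempty then
        (insert ((Tset h m S C).min' hT) S,
          delRow ((Bdel h m S C ((Tset h m S C).min' hT)).min' hB) C)
      else (S, C)
  else (S, C)

lemma phiAux_eval_ins {h m : ℕ} {S : Finset ℕ} {C : Finset (Finset (ℕ × ℕ))}
    (hT : (Tset h m S C).Nonempty) (hin : (Tset h m S C).min' hT ∈ S)
    (hB : (Bins h m S C ((Tset h m S C).min' hT)).Nonempty) :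
    phiAux h m S C = (S.erase ((Tset h m S C).min' hT),
      insRow ((Bins h m S C ((Tset h m S C).min' hT)).min' hB) C) := by
  unfold phiAux
  rw [dif_pos hT, if_pos hin, dif_pos hB]

lemma phiAux_eval_del {h m : ℕ} {S : Finset ℕ} {C : Finset (Finset (ℕ × ℕ))}
    (hT : (Tset h m S C).Nonempty) (hin : (Tset h m S C).min' hT ∉ S)
    (hB : (Bdel h m S C ((Tset h m S C).min' hT)).Nonempty) :
    phiAux h m S C = (insert ((Tset h m S C).min' hT) S,
      delRow ((Bdel h m S C ((Tset h m S C).min' hT)).min' hB) C) := by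
  unfold phiAux
  rw [dif_pos hT, if_neg hin, dif_pos hB]

lemma phiAux_eval_ins' {h m : ℕ} {S : Finset ℕ} {C : Finset (Finset (ℕ × ℕ))}
    (hT : (Tset h m S C).Nonempty) {ℓ : ℕ} (hℓeq : (Tset h m S C).min' hT = ℓ)
    (hin : ℓ ∈ S) (hB : (Bins h m S C ℓ).Nonempty) {b0 : ℕ}
    (hb0eq : (Bins h m S C ℓ).min' hB = b0) :
    phiAux h m S C = (S.erase ℓ, insRow b0 C) := by
  subst hb0eq
  subst hℓeq
  exact phiAux_eval_ins hT hin hB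

lemma phiAux_eval_del' {h m : ℕ} {S : Finset ℕ} {C : Finset (Finset (ℕ × ℕ))}
    (hT : (Tset h m S C).Nonempty) {ℓ : ℕ} (hℓeq : (Tset h m S C).min' hT = ℓ)
    (hin : ℓ ∉ S) (hB : (Bdel h m S C ℓ).Nonempty) {b0 : ℕ}
    (hb0eq : (Bdel h m S C ℓ).min' hB = b0) :
    phiAux h m S C = (insert ℓ S, delRow b0 C) := by
  subst hb0eq
  subst hℓeq
  exact phiAux_eval_del hT hin hB

lemma phi_flip {k n t s j m : ℕ} (hk : 2 ≤ k) (ht : 1 ≤ t) (hs : s = t + 2 + j)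
    (hm : k * s + 1 ≤ m) {S : Finset ℕ} {C : Finset (Finset (ℕ × ℕ))}
    (hS : S ⊆ Finset.range (j + 1)) (hG : GoodConf k n t s (m - S.card) C) :
    ∃ S' C', phiAux (t * k + 1) m S C = (S', C') ∧ S' ⊆ Finset.range (j + 1) ∧
      GoodConf k n t s (m - S'.card) C' ∧
      (S'.card + 1 = S.card ∨ S.card + 1 = S'.card) ∧
      phiAux (t * k + 1) m S' C' = (S, C) := by
  have hk1 : 1 ≤ k := by omega
  set M := m - S.card with hMdef
  have hks : k * s = t * k + 2 * k + j * k := by rw [hs]; ring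
  have hjk2 : j * 2 ≤ j * k := Nat.mul_le_mul_left j hk
  have htk : k ≤ t * k := Nat.le_mul_of_pos_left k (by omega)
  have hSle : S.card ≤ j + 1 := by
    have := Finset.card_le_card hS
    simpa using this
  have hMeq : M + S.card = m := by omega
  have hq_le : (leadSet C (t * k + 1) M).card ≤ j + 1 :=
    le_trans (lead_card_le hk1 hG) (high_card_le hk1 hG hs)
  have hTeq : Tset (t * k + 1) m S C
      = S ∪ (gapSet C (t * k + 1) M).image (idxL C (t * k + 1) M) := by
    rw [hMdef]; rfl
  have hT : (Tset (t * k + 1) m S C).Nonempty := by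
    rw [Finset.nonempty_iff_ne_empty]
    intro hemp
    rw [hTeq] at hemp
    have hSemp : S.card = 0 := by
      rw [(Finset.union_eq_empty.1 hemp).1]; rfl
    have hGemp : gapSet C (t * k + 1) M = ∅ :=
      Finset.image_eq_empty.1 (Finset.union_eq_empty.1 hemp).2
    have hbd := nogap_bound hk ht hG hs hGemp
    omega
  set ℓ := (Tset (t * k + 1) m S C).min' hT with hℓdef
  have hℓS_le : ∀ a ∈ S, ℓ ≤ a := fun a ha =>
    Finset.min'_le _ a (by rw [hTeq]; exact Finset.mem_union_left _ ha)
  have hℓG_le : ∀ g ∈ gapSet C (t * k + 1) M, ℓ ≤ idxL C (t * k + 1) M g := fun g hg =>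
    Finset.min'_le _ _
      (by rw [hTeq]; exact Finset.mem_union_right _ (Finset.mem_image_of_mem _ hg))
  have hM1 : 1 ≤ M := hG.M_pos hk1
  by_cases hcase : ℓ ∈ S
  · -- Case A : insert a row
    have hℓj : ℓ ≤ j := by have := Finset.mem_range.1 (hS hcase); omega
    have hℓ_lt_q : ℓ < (leadSet C (t * k + 1) M).card := by
      by_contra hq
      push_neg at hq
      have hGemp : gapSet C (t * k + 1) M = ∅ := by
        rw [Finset.eq_empty_iff_forall_notMem]
        intro g hg
        have h1 := hℓG_le g hg
        have h2 := idx_lt_card (mem_gapSet.1 hg).1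
        omega
      have hbd := nogap_bound hk ht hG hs hGemp
      have hScard : S.card ≤ j + 1 - ℓ := by
        have hsub : S ⊆ Finset.Icc ℓ j := fun a ha =>
          Finset.mem_Icc.2 ⟨hℓS_le a ha, by have := Finset.mem_range.1 (hS ha); omega⟩
        calc S.card ≤ (Finset.Icc ℓ j).card := Finset.card_le_card hsub
          _ = j + 1 - ℓ := by rw [Nat.card_Icc]
      omega
    have hBinseq : Bins (t * k + 1) m S C ℓ
        = (leadSet C (t * k + 1) M).filter (fun b => idxL C (t * k + 1) M b = ℓ) := by
      rw [hMdef]; rfl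
    have hBne : (Bins (t * k + 1) m S C ℓ).Nonempty := by
      obtain ⟨b, hb, hbidx⟩ := idx_surj hℓ_lt_q
      exact ⟨b, by rw [hBinseq]; exact Finset.mem_filter.2 ⟨hb, hbidx⟩⟩
    set b0 := (Bins (t * k + 1) m S C ℓ).min' hBne with hb0def
    have hb0mem : b0 ∈ (leadSet C (t * k + 1) M).filter
        (fun b => idxL C (t * k + 1) M b = ℓ) := by
      rw [← hBinseq]; exact Finset.min'_mem _ hBne
    rw [Finset.mem_filter] at hb0mem
    obtain ⟨hb0lead, hb0idx⟩ := hb0mem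
    have hGnotlt : ∀ g ∈ gapSet C (t * k + 1) M, ¬ g < b0 := by
      intro g hg hlt
      have h1 := idx_strict (mem_gapSet.1 hg).1 hlt
      have h2 := hℓG_le g hg
      omega
    have heval := phiAux_eval_ins' hT hℓdef.symm hcase hBne hb0def.symm
    have hSpos : 1 ≤ S.card := Finset.card_pos.2 ⟨ℓ, hcase⟩
    have hcard' : (S.erase ℓ).card = S.card - 1 := Finset.card_erase_of_mem hcase
    have hM' : m - (S.erase ℓ).card = M + 1 := by rw [hcard']; omega
    obtain ⟨⟨hb0h, hb0M⟩, hb0nsp, hb0occ⟩ := mem_leadSet.1 hb0lead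
    refine ⟨S.erase ℓ, insRow b0 C, heval, (Finset.erase_subset ℓ S).trans hS, ?_, ?_, ?_⟩
    · rw [hM']
      exact ins_good hk1 hG hb0lead
    · left; omega
    · -- reverse direction
      have Hocc : ∀ r, r ≤ b0 → (occRow C r ↔ occRow (insRow b0 C) r) := fun r hr =>
        (ins_occ_iff hr).symm
      have Hsp : ∀ c, c + 1 ≤ b0 → (spannedB C c ↔ spannedB (insRow b0 C) c) := fun c hc =>
        (ins_spanned_iff hc).symm
      have hgapcong := gap_filter_congr (h := t * k + 1) (M := M) (M' := M + 1) (b := b0)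
        Hocc Hsp (by omega) (by omega)
      have hidxcong : idxL C (t * k + 1) M b0 = idxL (insRow b0 C) (t * k + 1) (M + 1) b0 :=
        idx_congr Hocc Hsp (by omega) (by omega)
      have hGfilt : (gapSet C (t * k + 1) M).filter (· < b0) = ∅ :=
        Finset.filter_eq_empty_iff.2 hGnotlt
      have hG'notlt : ∀ g ∈ gapSet (insRow b0 C) (t * k + 1) (M + 1), b0 ≤ g := by
        intro g hg
        by_contra hlt
        push_neg at hlt
        have hmem : g ∈ (gapSet (insRow b0 C) (t * k + 1) (M + 1)).filter (· < b0) :=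
          Finset.mem_filter.2 ⟨hg, hlt⟩
        rw [← hgapcong, hGfilt] at hmem
        exact absurd hmem (Finset.notMem_empty _)
      have hb0G' : b0 ∈ gapSet (insRow b0 C) (t * k + 1) (M + 1) := by
        rw [mem_gapSet, mem_leadSet]
        refine ⟨⟨⟨hb0h, by omega⟩, ?_, (ins_occ_iff le_rfl).2 hb0occ⟩, ins_not_occ_b1⟩
        rintro ⟨p', hp', _, hst⟩
        exact ins_not_occ_b1 ⟨p', hp', hst⟩
      have hidx'b0 : idxL (insRow b0 C) (t * k + 1) (M + 1) b0 = ℓ := by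
        rw [← hidxcong]; exact hb0idx
      have hT'eq : Tset (t * k + 1) m (S.erase ℓ) (insRow b0 C) = (S.erase ℓ) ∪
          (gapSet (insRow b0 C) (t * k + 1) (M + 1)).image
            (idxL (insRow b0 C) (t * k + 1) (M + 1)) := by
        unfold Tset
        rw [hM']
      have hℓT' : ℓ ∈ Tset (t * k + 1) m (S.erase ℓ) (insRow b0 C) := by
        rw [hT'eq]
        exact Finset.mem_union_right _ (Finset.mem_image.2 ⟨b0, hb0G', hidx'b0⟩)
      have hT' : (Tset (t * k + 1) m (S.erase ℓ) (insRow b0 C)).Nonempty := ⟨ℓ, hℓT'⟩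
      have hmin' : (Tset (t * k + 1) m (S.erase ℓ) (insRow b0 C)).min' hT' = ℓ := by
        apply le_antisymm (Finset.min'_le _ _ hℓT')
        apply Finset.le_min'
        intro y hy
        rw [hT'eq, Finset.mem_union] at hy
        rcases hy with hyS | hyG
        · exact hℓS_le y (Finset.mem_of_mem_erase hyS)
        · obtain ⟨g, hg, rfl⟩ := Finset.mem_image.1 hyG
          calc ℓ = idxL (insRow b0 C) (t * k + 1) (M + 1) b0 := hidx'b0.symm
            _ ≤ idxL (insRow b0 C) (t * k + 1) (M + 1) g := idx_mono (hG'notlt g hg)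
      have hBdel'eq : Bdel (t * k + 1) m (S.erase ℓ) (insRow b0 C) ℓ =
          (gapSet (insRow b0 C) (t * k + 1) (M + 1)).filter
            (fun b => idxL (insRow b0 C) (t * k + 1) (M + 1) b = ℓ) := by
        unfold Bdel
        rw [hM']
      have hb0B' : b0 ∈ Bdel (t * k + 1) m (S.erase ℓ) (insRow b0 C) ℓ := by
        rw [hBdel'eq]; exact Finset.mem_filter.2 ⟨hb0G', hidx'b0⟩
      have hB'ne : (Bdel (t * k + 1) m (S.erase ℓ) (insRow b0 C) ℓ).Nonempty := ⟨b0, hb0B'⟩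
      have hminB' : (Bdel (t * k + 1) m (S.erase ℓ) (insRow b0 C) ℓ).min' hB'ne = b0 := by
        apply le_antisymm (Finset.min'_le _ _ hb0B')
        have hmm : (Bdel (t * k + 1) m (S.erase ℓ) (insRow b0 C) ℓ).min' hB'ne ∈
            (gapSet (insRow b0 C) (t * k + 1) (M + 1)).filter
              (fun b => idxL (insRow b0 C) (t * k + 1) (M + 1) b = ℓ) := by
          rw [← hBdel'eq]; exact Finset.min'_mem _ hB'ne
        exact hG'notlt _ (Finset.mem_filter.1 hmm).1
      have heval2 := phiAux_eval_del' hT' hmin' (Finset.notMem_erase ℓ S) hB'ne hminB'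
      rw [heval2, Finset.insert_erase hcase, ins_del_cancel]
  · -- Case B : delete a row
    have hℓTmem : ℓ ∈ S ∪ (gapSet C (t * k + 1) M).image (idxL C (t * k + 1) M) := by
      rw [← hTeq]; exact Finset.min'_mem _ hT
    rw [Finset.mem_union] at hℓTmem
    have hBdeleq : Bdel (t * k + 1) m S C ℓ
        = (gapSet C (t * k + 1) M).filter (fun b => idxL C (t * k + 1) M b = ℓ) := by
      rw [hMdef]; rfl
    have hBne : (Bdel (t * k + 1) m S C ℓ).Nonempty := by
      rcases hℓTmem with hℓS | hℓim
      · exact absurd hℓS hcase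
      · obtain ⟨g0, hg0, hg0idx⟩ := Finset.mem_image.1 hℓim
        exact ⟨g0, by rw [hBdeleq]; exact Finset.mem_filter.2 ⟨hg0, hg0idx⟩⟩
    set b0 := (Bdel (t * k + 1) m S C ℓ).min' hBne with hb0def
    have hb0mem : b0 ∈ (gapSet C (t * k + 1) M).filter
        (fun b => idxL C (t * k + 1) M b = ℓ) := by
      rw [← hBdeleq]; exact Finset.min'_mem _ hBne
    rw [Finset.mem_filter] at hb0mem
    obtain ⟨hb0gap, hb0idx⟩ := hb0mem
    have hb0lead : b0 ∈ leadSet C (t * k + 1) M := (mem_gapSet.1 hb0gap).1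
    have hb0ne : ¬ occRow C (b0 + 1) := (mem_gapSet.1 hb0gap).2
    have hGnotlt : ∀ g ∈ gapSet C (t * k + 1) M, b0 ≤ g := by
      intro g hg
      by_contra hlt
      push_neg at hlt
      have h1 := idx_strict (mem_gapSet.1 hg).1 hlt
      have h2 := hℓG_le g hg
      omega
    have hℓj : ℓ ≤ j := by
      have h1 := idx_lt_card hb0lead
      omega
    have hb2M : b0 + 2 ≤ M := gap_b2M hk1 hG hb0gap
    have hScard' : (insert ℓ S).card = S.card + 1 := Finset.card_insert_of_notMem hcase
    have hM' : m - (insert ℓ S).card = M - 1 := by rw [hScard']; omega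
    have hsub' : insert ℓ S ⊆ Finset.range (j + 1) :=
      Finset.insert_subset (Finset.mem_range.2 (by omega)) hS
    have heval := phiAux_eval_del' hT hℓdef.symm hcase hBne hb0def.symm
    obtain ⟨⟨hb0h, hb0M⟩, hb0nsp, hb0occ⟩ := mem_leadSet.1 hb0lead
    refine ⟨insert ℓ S, delRow b0 C, heval, hsub', ?_, Or.inr hScard'.symm, ?_⟩
    · rw [hM']
      exact del_good hk1 hG hb0gap
    · -- reverse direction
      have Hocc : ∀ r, r ≤ b0 → (occRow C r ↔ occRow (delRow b0 C) r) := fun r hr =>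
        (del_occ_iff hr).symm
      have Hsp : ∀ c, c + 1 ≤ b0 → (spannedB C c ↔ spannedB (delRow b0 C) c) := fun c hc =>
        (del_spanned_iff hc).symm
      have hgapcong := gap_filter_congr (h := t * k + 1) (M := M) (M' := M - 1) (b := b0)
        Hocc Hsp (by omega) (by omega)
      have hidxcong : idxL C (t * k + 1) M b0 = idxL (delRow b0 C) (t * k + 1) (M - 1) b0 :=
        idx_congr Hocc Hsp (by omega) (by omega)
      have hGfilt : (gapSet C (t * k + 1) M).filter (· < b0) = ∅ :=
        Finset.filter_eq_empty_iff.2 (fun g hg hlt => absurd (hGnotlt g hg) (by omega))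
      have hG'notlt : ∀ g ∈ gapSet (delRow b0 C) (t * k + 1) (M - 1), b0 ≤ g := by
        intro g hg
        by_contra hlt
        push_neg at hlt
        have hmem : g ∈ (gapSet (delRow b0 C) (t * k + 1) (M - 1)).filter (· < b0) :=
          Finset.mem_filter.2 ⟨hg, hlt⟩
        rw [← hgapcong, hGfilt] at hmem
        exact absurd hmem (Finset.notMem_empty _)
      have hb0lead' : b0 ∈ leadSet (delRow b0 C) (t * k + 1) (M - 1) := by
        rw [mem_leadSet]
        refine ⟨⟨hb0h, by omega⟩, ?_, (del_occ_iff le_rfl).2 hb0occ⟩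
        rintro ⟨p', hp', ⟨q1', hq1', hq1r⟩, ⟨q2', hq2', hq2r⟩⟩
        obtain ⟨p, hpC, rfl⟩ := Finset.mem_image.1 hp'
        obtain ⟨q1, hq1, rfl⟩ := Finset.mem_image.1 hq1'
        obtain ⟨q2, hq2, rfl⟩ := Finset.mem_image.1 hq2'
        have hq1row : q1.2 = b0 := by
          by_cases hc1 : b0 + 2 ≤ q1.2
          · unfold downMap at hq1r
            rw [if_pos hc1] at hq1r
            simp at hq1r; omega
          · unfold downMap at hq1r
            rwa [if_neg hc1] at hq1r
        have hq2row : q2.2 = b0 + 2 := by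
          by_cases hc2 : b0 + 2 ≤ q2.2
          · unfold downMap at hq2r
            rw [if_pos hc2] at hq2r
            simp at hq2r; omega
          · unfold downMap at hq2r
            rw [if_neg hc2] at hq2r
            exact absurd hq2r (no_site_b1 hb0ne hpC hq2)
        obtain ⟨qm, hqm, hqmr⟩ := placement_between hk1 (hG.1.2.1 p hpC) hq1 hq2
          (r := b0 + 1) (by omega) (by omega)
        exact no_site_b1 hb0ne hpC hqm hqmr
      have hidx'b0 : idxL (delRow b0 C) (t * k + 1) (M - 1) b0 = ℓ := by
        rw [← hidxcong]; exact hb0idx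
      have hT'eq : Tset (t * k + 1) m (insert ℓ S) (delRow b0 C) = (insert ℓ S) ∪
          (gapSet (delRow b0 C) (t * k + 1) (M - 1)).image
            (idxL (delRow b0 C) (t * k + 1) (M - 1)) := by
        unfold Tset
        rw [hM']
      have hℓT' : ℓ ∈ Tset (t * k + 1) m (insert ℓ S) (delRow b0 C) := by
        rw [hT'eq]
        exact Finset.mem_union_left _ (Finset.mem_insert_self ℓ S)
      have hT' : (Tset (t * k + 1) m (insert ℓ S) (delRow b0 C)).Nonempty := ⟨ℓ, hℓT'⟩
      have hmin' : (Tset (t * k + 1) m (insert ℓ S) (delRow b0 C)).min' hT' = ℓ := by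
        apply le_antisymm (Finset.min'_le _ _ hℓT')
        apply Finset.le_min'
        intro y hy
        rw [hT'eq, Finset.mem_union] at hy
        rcases hy with hyS | hyG
        · rcases Finset.mem_insert.1 hyS with rfl | hyS'
          · exact le_rfl
          · exact hℓS_le y hyS'
        · obtain ⟨g, hg, rfl⟩ := Finset.mem_image.1 hyG
          calc ℓ = idxL (delRow b0 C) (t * k + 1) (M - 1) b0 := hidx'b0.symm
            _ ≤ idxL (delRow b0 C) (t * k + 1) (M - 1) g := idx_mono (hG'notlt g hg)
      have hBins'eq : Bins (t * k + 1) m (insert ℓ S) (delRow b0 C) ℓ =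
          (leadSet (delRow b0 C) (t * k + 1) (M - 1)).filter
            (fun b => idxL (delRow b0 C) (t * k + 1) (M - 1) b = ℓ) := by
        unfold Bins
        rw [hM']
      have hb0B' : b0 ∈ Bins (t * k + 1) m (insert ℓ S) (delRow b0 C) ℓ := by
        rw [hBins'eq]; exact Finset.mem_filter.2 ⟨hb0lead', hidx'b0⟩
      have hB'ne : (Bins (t * k + 1) m (insert ℓ S) (delRow b0 C) ℓ).Nonempty := ⟨b0, hb0B'⟩
      have hminB' : (Bins (t * k + 1) m (insert ℓ S) (delRow b0 C) ℓ).min' hB'ne = b0 := by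
        apply le_antisymm (Finset.min'_le _ _ hb0B')
        have hmm : (Bins (t * k + 1) m (insert ℓ S) (delRow b0 C) ℓ).min' hB'ne ∈
            (leadSet (delRow b0 C) (t * k + 1) (M - 1)).filter
              (fun b => idxL (delRow b0 C) (t * k + 1) (M - 1) b = ℓ) := by
          rw [← hBins'eq]; exact Finset.min'_mem _ hB'ne
        rw [Finset.mem_filter] at hmm
        by_contra hnb
        push_neg at hnb
        have h1 := idx_strict hmm.1 hnb
        rw [hmm.2, hidx'b0] at h1
        exact absurd h1 (lt_irrefl ℓ)
      have heval2 := phiAux_eval_ins' hT' hmin' (Finset.mem_insert_self ℓ S) hB'ne hminB'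
      rw [heval2, Finset.erase_insert hcase, del_ins_cancel hb0ne]

/-! ### Finiteness and assembly -/

noncomputable def cfgF (k n t s m M : ℕ) : Finset (Finset (Finset (ℕ × ℕ))) :=
  ((Finset.range (n + 1) ×ˢ Finset.range (m + 1)).powerset.powerset).filter
    (GoodConf k n t s M)

lemma placement_col {k n M : ℕ} (hk : 1 ≤ k) {p : Finset (ℕ × ℕ)}
    (hp : IsFreePlacement k n M p) {q : ℕ × ℕ} (hq : q ∈ p) : q.1 ≤ n := by
  rcases hp with ⟨c, r, hc1, hck, hr1, hrM, rfl⟩ | ⟨c, r, hc1, hcn, hr1, hrk, rfl⟩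
  · simp only [horizKmer, mem_image, mem_range] at hq
    obtain ⟨i, hi, rfl⟩ := hq
    simp only
    omega
  · simp only [vertKmer, mem_image, mem_range] at hq
    obtain ⟨i, hi, rfl⟩ := hq
    simpa using hcn

lemma good_mem_bigSet {k n t s m M : ℕ} (hk : 1 ≤ k) (hMm : M ≤ m)
    {C : Finset (Finset (ℕ × ℕ))} (hG : GoodConf k n t s M C) :
    C ∈ (Finset.range (n + 1) ×ˢ Finset.range (m + 1)).powerset.powerset := by
  rw [Finset.mem_powerset]
  intro p hp
  rw [Finset.mem_powerset]
  intro q hq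
  have h1 := placement_row_pos hk (hG.1.2.1 p hp) hq
  have h2 := placement_col hk (hG.1.2.1 p hp) hq
  rw [Finset.mem_product, Finset.mem_range, Finset.mem_range]
  omega

lemma set_eq_cfgF {k n t s m M : ℕ} (hk : 1 ≤ k) (hMm : M ≤ m) :
    {C | GoodConf k n t s M C} = ↑(cfgF k n t s m M) := by
  ext C
  constructor
  · intro hC
    exact Finset.mem_coe.2 (Finset.mem_filter.2 ⟨good_mem_bigSet hk hMm hC, hC⟩)
  · intro hC
    exact (Finset.mem_filter.1 (Finset.mem_coe.1 hC)).2

noncomputable def phiSig (h m : ℕ) (x : Σ _ : Finset ℕ, Finset (Finset (ℕ × ℕ))) :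
    Σ _ : Finset ℕ, Finset (Finset (ℕ × ℕ)) :=
  ⟨(phiAux h m x.1 x.2).1, (phiAux h m x.1 x.2).2⟩

lemma phiSig_eq {h m : ℕ} {x : Σ _ : Finset ℕ, Finset (Finset (ℕ × ℕ))}
    {S' : Finset ℕ} {C' : Finset (Finset (ℕ × ℕ))}
    (heval : phiAux h m x.1 x.2 = (S', C')) : phiSig h m x = ⟨S', C'⟩ := by
  unfold phiSig
  rw [heval]

/-- Lemma on `j` unrestricted `k`-mers, barred version with top restriction: for
`t ≥ 1`, `s = t + 2 + j`, and `m ≥ k s + 1`, `∑_{i=0}^{j+1} (-1)^i C(j+1,i) A(m-i) = 0`,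
where `A(m')` counts configurations of `s` `k`-mers on the `n × m'` lattice with rows
`1, k+1, …, (t-1)k+1` bottom-anchored, row `tk+1` barred, and some placement
occupying a site in row `m'`. -/
theorem j_unrestricted_barred_with_top (k n s : ℕ) (hk : 2 ≤ k) (hn : 1 ≤ n) (hs1 : 1 ≤ s)
    (t j : ℕ) (ht : 1 ≤ t) (hs : s = t + 2 + j) (m : ℕ) (hm : k * s + 1 ≤ m) :
    ∑ i ∈ Finset.range (j + 2),
        (-1 : ℤ) ^ i * ((j + 1).choose i : ℤ) *
          ({C | IsFreeConfig k n (m - i) s C ∧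
              (∀ j' < t, BottomAnchored C (j' * k + 1)) ∧
              Barred C (t * k + 1) ∧
              ∃ p ∈ C, ∃ q ∈ p, q.2 = m - i}.ncard : ℤ) = 0 := by
  have hk1 : 1 ≤ k := by omega
  have hsets : ∀ i : ℕ,
      ({C | IsFreeConfig k n (m - i) s C ∧
          (∀ j' < t, BottomAnchored C (j' * k + 1)) ∧
          Barred C (t * k + 1) ∧
          ∃ p ∈ C, ∃ q ∈ p, q.2 = m - i}.ncard : ℤ)
        = ((cfgF k n t s m (m - i)).card : ℤ) := by
    intro i
    have h1 : {C | IsFreeConfig k n (m - i) s C ∧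
        (∀ j' < t, BottomAnchored C (j' * k + 1)) ∧
        Barred C (t * k + 1) ∧
        ∃ p ∈ C, ∃ q ∈ p, q.2 = m - i} = {C | GoodConf k n t s (m - i) C} := rfl
    rw [h1, set_eq_cfgF hk1 (Nat.sub_le m i), Set.ncard_coe_finset]
  simp only [hsets]
  have hstep : ∑ i ∈ Finset.range (j + 2),
      (-1 : ℤ) ^ i * ((j + 1).choose i : ℤ) * ((cfgF k n t s m (m - i)).card : ℤ)
      = ∑ S ∈ (Finset.range (j + 1)).powerset,
          (-1 : ℤ) ^ S.card * ((cfgF k n t s m (m - S.card)).card : ℤ) := by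
    rw [Finset.sum_powerset, Finset.card_range]
    apply Finset.sum_congr rfl
    intro i _
    calc (-1 : ℤ) ^ i * ((j + 1).choose i : ℤ) * ((cfgF k n t s m (m - i)).card : ℤ)
        = ((j + 1).choose i : ℤ) * ((-1 : ℤ) ^ i * ((cfgF k n t s m (m - i)).card : ℤ)) := by
          ring
      _ = ∑ S ∈ Finset.powersetCard i (Finset.range (j + 1)),
            (-1 : ℤ) ^ i * ((cfgF k n t s m (m - i)).card : ℤ) := by
          rw [Finset.sum_const, Finset.card_powersetCard, Finset.card_range, nsmul_eq_mul]
      _ = ∑ S ∈ Finset.powersetCard i (Finset.range (j + 1)),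
            (-1 : ℤ) ^ S.card * ((cfgF k n t s m (m - S.card)).card : ℤ) := by
          apply Finset.sum_congr rfl
          intro S hS
          rw [(Finset.mem_powersetCard.1 hS).2]
  rw [hstep]
  have hconst : ∀ S : Finset ℕ,
      (-1 : ℤ) ^ S.card * ((cfgF k n t s m (m - S.card)).card : ℤ)
        = ∑ _C ∈ cfgF k n t s m (m - S.card), (-1 : ℤ) ^ S.card := by
    intro S
    rw [Finset.sum_const, nsmul_eq_mul]
    ring
  rw [Finset.sum_congr rfl (fun S _ => hconst S), Finset.sum_sigma']
  set X := ((Finset.range (j + 1)).powerset).sigma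
      (fun S => cfgF k n t s m (m - S.card)) with hX
  have key : ∀ x : Σ _ : Finset ℕ, Finset (Finset (ℕ × ℕ)), x ∈ X →
      ∃ S' C', phiAux (t * k + 1) m x.1 x.2 = (S', C') ∧ S' ⊆ Finset.range (j + 1) ∧
        GoodConf k n t s (m - S'.card) C' ∧
        (S'.card + 1 = x.1.card ∨ x.1.card + 1 = S'.card) ∧
        phiAux (t * k + 1) m S' C' = (x.1, x.2) := by
    intro x hx
    rw [hX, Finset.mem_sigma] at hx
    exact phi_flip hk ht hs hm (Finset.mem_powerset.1 hx.1)
      (Finset.mem_filter.1 hx.2).2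
  refine Finset.sum_involution (fun x _ => phiSig (t * k + 1) m x) ?_ ?_ ?_ ?_
  · intro x hx
    obtain ⟨S', C', heval, _, _, hcards, _⟩ := key x hx
    show (-1 : ℤ) ^ x.1.card + (-1 : ℤ) ^ (phiSig (t * k + 1) m x).1.card = 0
    rw [phiSig_eq heval]
    show (-1 : ℤ) ^ x.1.card + (-1 : ℤ) ^ S'.card = 0
    rcases hcards with hc | hc
    · rw [← hc, pow_succ]
      ring
    · rw [← hc, pow_succ]
      ring
  · intro x hx _
    obtain ⟨S', C', heval, _, _, hcards, _⟩ := key x hx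
    show phiSig (t * k + 1) m x ≠ x
    rw [phiSig_eq heval]
    intro hcontra
    have h1 : S' = x.1 := congrArg Sigma.fst hcontra
    rw [h1] at hcards
    omega
  · intro x hx
    obtain ⟨S', C', heval, hS', hG', _, _⟩ := key x hx
    show phiSig (t * k + 1) m x ∈ X
    rw [phiSig_eq heval, hX]
    exact Finset.mem_sigma.2 ⟨Finset.mem_powerset.2 hS',
      Finset.mem_filter.2 ⟨good_mem_bigSet hk1 (Nat.sub_le m S'.card) hG', hG'⟩⟩
  · intro x hx
    obtain ⟨S', C', heval, _, _, _, hrev⟩ := key x hx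
    show phiSig (t * k + 1) m (phiSig (t * k + 1) m x) = x
    rw [phiSig_eq heval]
    exact phiSig_eq (x := ⟨S', C'⟩) hrev
end

section
/- (Fully anchored configurations factorize.) Assume n ≥ k and m ≥ ks. The number of configurations of s k-mers on the n × m lattice with free boundary conditions in which row jk+1 is bottom-anchored for every j ∈ {0, 1, …, s−1} equals (2n − k + 1)^s. -/
namespace AnchoredAux

lemma mem_horiz {k c r : ℕ} {q : ℕ × ℕ} :
    q ∈ horizKmer k c r ↔ ∃ i < k, q = (c + i, r) := by
  simp [horizKmer, eq_comm]

lemma mem_vert {k c r : ℕ} {q : ℕ × ℕ} :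
    q ∈ vertKmer k c r ↔ ∃ i < k, q = (c, r + i) := by
  simp [vertKmer, eq_comm]

lemma horiz_inj {k c r c' r' : ℕ} (hk : 1 ≤ k)
    (h : horizKmer k c r = horizKmer k c' r') : c = c' ∧ r = r' := by
  have h1 : (c, r) ∈ horizKmer k c' r' := by
    rw [← h, mem_horiz]; exact ⟨0, hk, by simp⟩
  have h2 : (c', r') ∈ horizKmer k c r := by
    rw [h, mem_horiz]; exact ⟨0, hk, by simp⟩
  rw [mem_horiz] at h1 h2
  obtain ⟨i, _, hi⟩ := h1
  obtain ⟨i', _, hi'⟩ := h2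
  simp only [Prod.mk.injEq] at hi hi'
  omega

lemma vert_inj {k c r c' r' : ℕ} (hk : 1 ≤ k)
    (h : vertKmer k c r = vertKmer k c' r') : c = c' ∧ r = r' := by
  have h1 : (c, r) ∈ vertKmer k c' r' := by
    rw [← h, mem_vert]; exact ⟨0, hk, by simp⟩
  have h2 : (c', r') ∈ vertKmer k c r := by
    rw [h, mem_vert]; exact ⟨0, hk, by simp⟩
  rw [mem_vert] at h1 h2
  obtain ⟨i, _, hi⟩ := h1
  obtain ⟨i', _, hi'⟩ := h2
  simp only [Prod.mk.injEq] at hi hi'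
  omega

lemma horiz_ne_vert {k c r c' r' : ℕ} (hk : 2 ≤ k) :
    horizKmer k c r ≠ vertKmer k c' r' := by
  intro h
  have h1 : (c', r') ∈ horizKmer k c r := by
    rw [h, mem_vert]; exact ⟨0, by omega, by simp⟩
  have h2 : (c', r' + 1) ∈ horizKmer k c r := by
    rw [h, mem_vert]; exact ⟨1, by omega, by simp⟩
  rw [mem_horiz] at h1 h2
  obtain ⟨i, _, hi⟩ := h1
  obtain ⟨i', _, hi'⟩ := h2
  simp only [Prod.mk.injEq] at hi hi'
  omega

/-- The `v`-th possible anchored placement in band `j`. -/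
def merOf (k n j v : ℕ) : Finset (ℕ × ℕ) :=
  if v ≤ n - k then horizKmer k (v + 1) (j * k + 1)
  else vertKmer k (v - (n - k)) (j * k + 1)

lemma merOf_rows {k n j v : ℕ} {q : ℕ × ℕ} (hq : q ∈ merOf k n j v) :
    j * k + 1 ≤ q.2 ∧ q.2 ≤ j * k + k := by
  unfold merOf at hq
  split at hq
  · rw [mem_horiz] at hq; obtain ⟨i, hi, rfl⟩ := hq; simp; omega
  · rw [mem_vert] at hq; obtain ⟨i, hi, rfl⟩ := hq; simp; omega

lemma merOf_bottom {k n j v : ℕ} (hk : 1 ≤ k) :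
    ∃ q ∈ merOf k n j v, q.2 = j * k + 1 := by
  unfold merOf
  split
  · exact ⟨(v + 1, j * k + 1), mem_horiz.2 ⟨0, hk, by simp⟩, rfl⟩
  · exact ⟨(v - (n - k), j * k + 1), mem_vert.2 ⟨0, hk, by simp⟩, rfl⟩

lemma merOf_placement {k n m s j v : ℕ} (hk : 2 ≤ k) (hn : k ≤ n)
    (hm : k * s ≤ m) (hj : j < s) (hv : v ≤ 2 * n - k) :
    IsFreePlacement k n m (merOf k n j v) := by
  unfold merOf
  split
  · exact Or.inl ⟨v + 1, j * k + 1, by omega, by omega, by omega, by nlinarith, rfl⟩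
  · exact Or.inr ⟨v - (n - k), j * k + 1, by omega, by omega, by omega, by nlinarith, rfl⟩

lemma merOf_inj {k n j v j' v' : ℕ} (hk : 2 ≤ k)
    (h : merOf k n j v = merOf k n j' v') : j = j' ∧ v = v' := by
  have hj : j = j' := by
    obtain ⟨q, hq, hq2⟩ := merOf_bottom (k := k) (n := n) (j := j) (v := v) (by omega)
    have h1 := merOf_rows (h ▸ hq)
    obtain ⟨q', hq', hq2'⟩ := merOf_bottom (k := k) (n := n) (j := j') (v := v') (by omega)
    have h2 := merOf_rows (h.symm ▸ hq')
    nlinarith [h1.1, h1.2, h2.1, h2.2, hq2, hq2']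
  subst hj
  unfold merOf at h
  split at h <;> split at h
  · exact ⟨rfl, by have := (horiz_inj (by omega) h).1; omega⟩
  · exact absurd h (horiz_ne_vert hk)
  · exact absurd h.symm (horiz_ne_vert hk)
  · exact ⟨rfl, by have := (vert_inj (by omega) h).1; omega⟩

lemma merOf_disjoint {k n j v j' v' : ℕ} (hk : 2 ≤ k) (hjj : j ≠ j') :
    Disjoint (merOf k n j v) (merOf k n j' v') := by
  rw [Finset.disjoint_left]
  intro q hq hq'
  have h1 := merOf_rows hq
  have h2 := merOf_rows hq'
  rcases Nat.lt_or_ge j j' with h | h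
  · nlinarith [h1.1, h1.2, h2.1, h2.2]
  · have : j' < j := by omega
    nlinarith [h1.1, h1.2, h2.1, h2.2]

variable (k n s : ℕ)

/-- Encoding map. -/
noncomputable def F (f : Fin s → Fin (2 * n - k + 1)) : Finset (Finset (ℕ × ℕ)) :=
  Finset.univ.image fun j : Fin s => merOf k n j.1 (f j).1

lemma F_card (hk : 2 ≤ k) (f : Fin s → Fin (2 * n - k + 1)) : (F k n s f).card = s := by
  rw [F, Finset.card_image_of_injective _ ?_, Finset.card_univ, Fintype.card_fin]
  intro j j' h
  exact Fin.ext (merOf_inj hk h).1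

lemma mem_F {f : Fin s → Fin (2 * n - k + 1)} {p : Finset (ℕ × ℕ)} :
    p ∈ F k n s f ↔ ∃ j : Fin s, p = merOf k n j.1 (f j).1 := by
  simp [F, eq_comm]

lemma F_anchored (hk : 2 ≤ k) (f : Fin s → Fin (2 * n - k + 1)) (j : ℕ) (hj : j < s) :
    BottomAnchored (F k n s f) (j * k + 1) := by
  constructor
  · exact ⟨merOf k n j (f ⟨j, hj⟩).1, (mem_F k n s).2 ⟨⟨j, hj⟩, rfl⟩,
      merOf_bottom (by omega)⟩
  · intro p hp ⟨q, hq, hq2⟩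
    obtain ⟨j', rfl⟩ := (mem_F k n s).1 hp
    have hb := merOf_rows hq
    have hjj : j'.1 = j := by nlinarith [hb.1, hb.2, hq2, hk]
    constructor
    · exact ⟨q, hq, hq2⟩
    · intro q' hq'
      have hr := merOf_rows hq'
      rw [hjj] at hr
      omega

lemma F_config (hk : 2 ≤ k) (hn : k ≤ n) (m : ℕ) (hm : k * s ≤ m)
    (f : Fin s → Fin (2 * n - k + 1)) : IsFreeConfig k n m s (F k n s f) := by
  refine ⟨F_card k n s hk f, ?_, ?_⟩
  · intro p hp
    obtain ⟨j, rfl⟩ := (mem_F k n s).1 hp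
    exact merOf_placement hk hn hm j.2 (by have := (f j).2; omega)
  · intro p hp q hq hpq
    obtain ⟨j, rfl⟩ := (mem_F k n s).1 hp
    obtain ⟨j', rfl⟩ := (mem_F k n s).1 hq
    have : j.1 ≠ j'.1 := fun h => hpq (by have hjj : j = j' := Fin.ext h; rw [hjj])
    exact merOf_disjoint hk this

end AnchoredAux

namespace AnchoredAux

lemma decode (k n : ℕ) (hk : 2 ≤ k) (hn : k ≤ n) {m : ℕ} {C : Finset (Finset (ℕ × ℕ))}
    (hC : ∀ p ∈ C, IsFreePlacement k n m p) {j : ℕ}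
    (hB : BottomAnchored C (j * k + 1)) :
    ∃ v < 2 * n - k + 1, merOf k n j v ∈ C := by
  obtain ⟨⟨p, hp, hq⟩, hall⟩ := hB
  have ht := hall p hp hq
  rcases hC p hp with ⟨c, r, hc1, hc2, hr1, hr2, rfl⟩ | ⟨c, r, hc1, hc2, hr1, hr2, rfl⟩
  · have hr : r = j * k + 1 := by
      obtain ⟨q, hqp, hq2⟩ := hq
      rw [mem_horiz] at hqp
      obtain ⟨i, hi, rfl⟩ := hqp
      simpa using hq2
    refine ⟨c - 1, by omega, ?_⟩
    rw [merOf, if_pos (by omega)]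
    have hcc : c - 1 + 1 = c := by omega
    rw [hcc, ← hr]; exact hp
  · have hr : r = j * k + 1 := by
      obtain ⟨q, hqp, hq2⟩ := hq
      rw [mem_vert] at hqp
      obtain ⟨i, hi, rfl⟩ := hqp
      have hb := ht.2 (c, r) (mem_vert.2 ⟨0, by omega, by simp⟩)
      simp at hq2 hb
      omega
    refine ⟨c + (n - k), by omega, ?_⟩
    rw [merOf, if_neg (by omega)]
    have hcc : c + (n - k) - (n - k) = c := by omega
    rw [hcc, ← hr]; exact hp

lemma F_injective (k n s : ℕ) (hk : 2 ≤ k) : Function.Injective (F k n s) := by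
  intro f g h
  funext j
  have hm : merOf k n j.1 (f j).1 ∈ F k n s g := by
    rw [← h]; exact (mem_F k n s).2 ⟨j, rfl⟩
  obtain ⟨j', hj'⟩ := (mem_F k n s).1 hm
  obtain ⟨hjj, hv⟩ := merOf_inj hk hj'
  have hje : j' = j := Fin.ext hjj.symm
  subst hje
  exact Fin.ext hv

end AnchoredAux

open AnchoredAux

/-- Fully anchored configurations factorize: for `n ≥ k` and `m ≥ k s`, the number of
configurations of `s` `k`-mers on the `n × m` lattice with free boundary conditions
in which row `jk+1` is bottom-anchored for every `j ∈ {0, 1, …, s-1}` equals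
`(2n - k + 1)^s`. -/
theorem fully_anchored_factorize (k n s : ℕ) (hk : 2 ≤ k) (hn : k ≤ n) (hs : 1 ≤ s)
    (m : ℕ) (hm : k * s ≤ m) :
    {C | IsFreeConfig k n m s C ∧ ∀ j < s, BottomAnchored C (j * k + 1)}.ncard =
      (2 * n - k + 1) ^ s := by
  classical
  have hset : {C | IsFreeConfig k n m s C ∧ ∀ j < s, BottomAnchored C (j * k + 1)}
      = Set.range (F k n s) := by
    ext C
    simp only [Set.mem_setOf_eq, Set.mem_range]
    constructor
    · rintro ⟨hC, hA⟩
      have hdec : ∀ j : Fin s, ∃ v : Fin (2 * n - k + 1), merOf k n j.1 v.1 ∈ C := by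
        intro j
        obtain ⟨v, hv, hmem⟩ := decode k n hk hn hC.2.1 (hA j.1 j.2)
        exact ⟨⟨v, hv⟩, hmem⟩
      choose f hf using hdec
      refine ⟨f, ?_⟩
      refine Finset.eq_of_subset_of_card_le ?_ (le_of_eq (by rw [hC.1, F_card k n s hk f]))
      intro p hp
      obtain ⟨j, rfl⟩ := (mem_F k n s).1 hp
      exact hf j
    · rintro ⟨f, rfl⟩
      exact ⟨F_config k n s hk hn m hm f, fun j hj => F_anchored k n s hk f j hj⟩
  have hrange : Set.range (F k n s) = ↑(Finset.univ.image (F k n s)) := by simp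
  rw [hset, hrange, Set.ncard_coe_finset,
    Finset.card_image_of_injective _ (F_injective k n s hk), Finset.card_univ]
  simp [Fintype.card_fun]
end
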